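/- arXiv:math/0305369 — 7 statements merged into one kernel-verified Lean document; each statement's English description precedes it below -/
import Mathlib

section
/- Let A = {a_s(n_s)}_{s=1}^k be an m-cover of ℤ where m = p^n is a power of a prime p (n ∈ ℕ), and let m_1,...,m_k ∈ ℤ. Then there exists a nonempty subset I ⊆ {1,...,k} with Σ_{s∈I} m_s/n_s ∈ m ℤ. -/
open Finset Polynomial

lemma zz_count (q r : ℕ) (hq : q ≠ 0) (z : ZMod q) :
    ((Finset.range (q * r)).filter fun j : ℕ => ((j : ZMod q) = z)).card = r := by
  haveI : NeZero q := ⟨hq⟩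
  have himg : ((Finset.range (q * r)).filter fun j : ℕ => ((j : ZMod q) = z))
      = (Finset.range r).image (fun i => z.val + q * i) := by
    ext j
    simp only [Finset.mem_filter, Finset.mem_range, Finset.mem_image]
    constructor
    · rintro ⟨hlt, hz⟩
      refine ⟨j / q, ?_, ?_⟩
      · exact (Nat.div_lt_iff_lt_mul (Nat.pos_of_ne_zero hq)).mpr (by rwa [Nat.mul_comm] at hlt)
      · have hmod : j % q = z.val := by rw [← ZMod.val_natCast, hz]
        rw [← hmod]
        exact Nat.mod_add_div j q
    · rintro ⟨i, hi, rfl⟩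
      have hvlt : z.val < q := ZMod.val_lt z
      constructor
      · have h1 : z.val + q * i < q * (i + 1) := by rw [Nat.mul_succ]; omega
        exact lt_of_lt_of_le h1 (Nat.mul_le_mul_left q hi)
      · push_cast
        simp [ZMod.natCast_val, ZMod.cast_id, ZMod.natCast_self]
  rw [himg, Finset.card_image_of_injective _ ?hinj, Finset.card_range]
  intro x y hxy
  simp only at hxy
  have h2 : q * x = q * y := by omega
  exact Nat.eq_of_mul_eq_mul_left (Nat.pos_of_ne_zero hq) h2

lemma aux_main (p : ℕ) (hp : p.Prime) (e : ℕ) (k : ℕ) (a : Fin k → ℤ) (n : Fin k → ℕ)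
    (hn : ∀ s, 0 < n s)
    (hcover : ∀ x : ℤ,
      p ^ e ≤ (Finset.univ.filter fun s : Fin k => (n s : ℤ) ∣ x - a s).card)
    (m' : Fin k → ℕ) :
    ∃ I : Finset (Fin k), I.Nonempty ∧
      ∃ z : ℤ, ∑ s ∈ I, (m' s : ℚ) / (n s : ℚ) = (p : ℚ) ^ e * z := by
  classical
  have hppos : 0 < p := hp.pos
  set γ : Fin k → ℕ := fun s => (n s).factorization p with hγdef
  set n' : Fin k → ℕ := fun s => n s / p ^ ((n s).factorization p) with hn'def
  have hsplit : ∀ s, n s = p ^ γ s * n' s := by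
    intro s
    simp only [hγdef, hn'def]
    exact (Nat.ordProj_mul_ordCompl_eq_self (n s) p).symm
  have hn'pos : ∀ s, 0 < n' s := by
    intro s
    simp only [hn'def]
    exact Nat.ordCompl_pos p (hn s).ne'
  have hpn' : ∀ s, ¬ p ∣ n' s := by
    intro s
    simp only [hn'def]
    exact Nat.not_dvd_ordCompl hp (hn s).ne'
  set M : ℕ := ∏ s, n' s with hMdef
  have hn'dvdM : ∀ s, n' s ∣ M := fun s => Finset.dvd_prod_of_mem _ (Finset.mem_univ s)
  have hMpos : 0 < M := Finset.prod_pos (fun s _ => hn'pos s)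
  have hpM : ¬ p ∣ M := by
    intro hdvd
    obtain ⟨s, -, hs⟩ := (hp.prime.dvd_finset_prod_iff _).mp hdvd
    exact hpn' s hs
  set c : ℕ := ∑ s, γ s with hcdef
  have hγc : ∀ s, γ s ≤ c := fun s => Finset.single_le_sum (fun i _ => Nat.zero_le _) (Finset.mem_univ s)
  set L : ℕ := e + c with hLdef
  set R : ℕ := p ^ L * M with hRdef
  have hRpos : 0 < R := by positivity
  set d : Fin k → ℕ := fun s => m' s * (M / n' s) with hddef
  set b : Fin k → ℕ := fun s => d s * p ^ (c - γ s) with hbdef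
  have hbn : ∀ s, b s * n s = m' s * (M * p ^ c) := by
    intro s
    have h1 : M / n' s * n' s = M := Nat.div_mul_cancel (hn'dvdM s)
    calc b s * n s = m' s * (M / n' s) * p ^ (c - γ s) * (p ^ γ s * n' s) := by
          rw [hbdef, hddef, ← hsplit s]
      _ = m' s * ((M / n' s * n' s) * (p ^ (c - γ s) * p ^ γ s)) := by ring
      _ = m' s * (M * p ^ c) := by rw [h1, ← pow_add, Nat.sub_add_cancel (hγc s)]
  -- reduce to a divisibility statement
  suffices hsuff : ∃ I : Finset (Fin k), I.Nonempty ∧ R ∣ ∑ s ∈ I, b s by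
    obtain ⟨I, hI, w, hw⟩ := hsuff
    refine ⟨I, hI, (w : ℤ), ?_⟩
    have hMc0 : ((M : ℚ) * (p : ℚ) ^ c) ≠ 0 := by positivity
    have hterm : ∀ s, (m' s : ℚ) / (n s : ℚ) = (b s : ℚ) / ((M : ℚ) * (p : ℚ) ^ c) := by
      intro s
      rw [div_eq_div_iff (by exact_mod_cast (hn s).ne') hMc0]
      exact_mod_cast congrArg (Nat.cast (R := ℚ)) (hbn s).symm
    rw [Finset.sum_congr rfl (fun s _ => hterm s), ← Finset.sum_div]
    have hsumcast : (∑ s ∈ I, (b s : ℚ)) = ((R * w : ℕ) : ℚ) := by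
      rw [← Nat.cast_sum, hw]
    rw [hsumcast]
    have hval : ((R * w : ℕ) : ℚ) = (p : ℚ) ^ e * (w : ℚ) * ((M : ℚ) * (p : ℚ) ^ c) := by
      push_cast [hRdef, hLdef, pow_add]
      ring
    rw [hval, mul_div_cancel_right₀ _ hMc0]
    push_cast
    ring
  by_contra hcon
  push_neg at hcon
  -- hcon : ∀ I, I.Nonempty → ¬ R ∣ ∑ s ∈ I, b s
  haveI : Fact p.Prime := ⟨hp⟩
  set F := AlgebraicClosure (ZMod p) with hFdef
  have hMF : ((M : ℕ) : F) ≠ 0 := by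
    rw [Ne, CharP.cast_eq_zero_iff F p M]
    exact hpM
  haveI : NeZero ((M : ℕ) : F) := ⟨hMF⟩
  obtain ⟨σ, hσ⟩ : ∃ σ : F, IsPrimitiveRoot σ M := by
    have h0 : (Polynomial.cyclotomic M F).degree ≠ 0 := by
      rw [Polynomial.degree_cyclotomic]
      simpa using (Nat.totient_pos.mpr hMpos).ne'
    obtain ⟨σ, hσ⟩ := IsAlgClosed.exists_root _ h0
    exact ⟨σ, Polynomial.isRoot_cyclotomic_iff.mp hσ⟩
  set σu : Fˣ := (hσ.isUnit hMpos.ne').unit with hσudef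
  have hσuval : ((σu : Fˣ) : F) = σ := IsUnit.unit_spec _
  have hσuM : ∀ w : ℤ, σu ^ ((M : ℤ) * w) = 1 := by
    intro w
    have h1 : σu ^ (M : ℕ) = 1 := by
      ext
      push_cast [hσuval]
      exact hσ.pow_eq_one
    rw [zpow_mul, zpow_natCast, h1, one_zpow]
  set cc : Fin k → F := fun s => ((σu ^ (-(a s) * (b s : ℤ)) : Fˣ) : F) with hccdef
  set Pl : Polynomial F := ∏ s : Fin k, (1 - Polynomial.C (cc s) * Polynomial.X ^ (b s)) with hPldef
  -- Step B : averaged covering bound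
  have hB : ∀ T : ℤ, p ^ L ≤ ∑ s ∈ Finset.univ.filter (fun s : Fin k => (n' s : ℤ) ∣ (T - a s)), p ^ (c - γ s) := by
    intro T
    have h1 : p ^ c * p ^ e ≤ ∑ j ∈ Finset.range (p ^ c),
        ((Finset.univ.filter fun s : Fin k => (n s : ℤ) ∣ ((T + M * j) - a s)).card) := by
      calc p ^ c * p ^ e = ∑ _j ∈ Finset.range (p ^ c), p ^ e := by
            rw [Finset.sum_const, Finset.card_range, smul_eq_mul]
        _ ≤ _ := Finset.sum_le_sum fun j _ => hcover (T + M * j)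
    have h4 : ∀ s : Fin k, (∑ j ∈ Finset.range (p ^ c), if (n s : ℤ) ∣ ((T + M * j) - a s) then 1 else 0)
        = if (n' s : ℤ) ∣ (T - a s) then p ^ (c - γ s) else 0 := by
      intro s
      have hn'M : (n' s : ℤ) ∣ (M : ℤ) := Int.natCast_dvd_natCast.mpr (hn'dvdM s)
      have hqn : (n s : ℤ) = ((p ^ γ s : ℕ) : ℤ) * (n' s : ℤ) := by exact_mod_cast congrArg (Nat.cast (R := ℤ)) (hsplit s)
      by_cases hds : (n' s : ℤ) ∣ (T - a s)
      · rw [if_pos hds]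
        have hcopr : Nat.Coprime M (p ^ γ s) :=
          Nat.Coprime.pow_right _ (Nat.coprime_comm.mp (hp.coprime_iff_not_dvd.mpr hpM))
        haveI : NeZero (p ^ γ s) := ⟨(pow_pos hppos _).ne'⟩
        set uM : (ZMod (p ^ γ s))ˣ := ZMod.unitOfCoprime M hcopr with huMdef
        set zs : ZMod (p ^ γ s) := (uM⁻¹ : (ZMod (p ^ γ s))ˣ) * (-(((T - a s : ℤ) : ZMod (p ^ γ s)))) with hzsdef
        have hiff : ∀ j : ℕ, ((n s : ℤ) ∣ ((T + M * j) - a s)) ↔ ((j : ZMod (p ^ γ s)) = zs) := by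
          intro j
          have hco : IsCoprime ((p ^ γ s : ℕ) : ℤ) ((n' s : ℕ) : ℤ) :=
            Nat.isCoprime_iff_coprime.mpr (Nat.Coprime.pow_left _ (hp.coprime_iff_not_dvd.mpr (hpn' s)))
          have hstep1 : ((n s : ℤ) ∣ ((T + M * j) - a s)) ↔ (((p ^ γ s : ℕ) : ℤ) ∣ ((T + M * j) - a s)) := by
            constructor
            · intro h
              exact dvd_trans ⟨(n' s : ℤ), hqn⟩ h
            · intro h
              rw [hqn]
              refine hco.mul_dvd h ?_
              have hrearr : (T + M * j) - a s = (T - a s) + (M : ℤ) * j := by ring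
              rw [hrearr]
              exact dvd_add hds (Dvd.dvd.mul_right hn'M _)
          rw [hstep1, ← ZMod.intCast_zmod_eq_zero_iff_dvd]
          have hcast : ((((T + M * j) - a s : ℤ) : ZMod (p ^ γ s)))
              = ((T - a s : ℤ) : ZMod (p ^ γ s)) + ((uM : (ZMod (p ^ γ s))ˣ) : ZMod (p ^ γ s)) * (j : ZMod (p ^ γ s)) := by
            rw [huMdef, ZMod.coe_unitOfCoprime]
            push_cast
            ring
          rw [hcast]
          rw [add_comm, add_eq_zero_iff_eq_neg]
          rw [hzsdef]
          exact (Units.eq_inv_mul_iff_mul_eq uM).symm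
        have hcount : (∑ j ∈ Finset.range (p ^ c), if (n s : ℤ) ∣ ((T + M * j) - a s) then 1 else 0)
            = ((Finset.range (p ^ c)).filter fun j : ℕ => ((j : ZMod (p ^ γ s)) = zs)).card := by
          rw [Finset.card_filter]
          exact Finset.sum_congr rfl fun j _ => by simp only [hiff j]
        rw [hcount]
        have hrange : p ^ c = p ^ γ s * p ^ (c - γ s) := by
          rw [← pow_add, Nat.add_sub_cancel' (hγc s)]
        rw [hrange, zz_count _ _ (pow_pos hppos _).ne' zs]
      · rw [if_neg hds]
        apply Finset.sum_eq_zero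
        intro j _
        rw [if_neg]
        intro hcontra
        apply hds
        have h5 : (n' s : ℤ) ∣ ((T + M * j) - a s) := dvd_trans ⟨((p ^ γ s : ℕ) : ℤ), by rw [hqn]; ring⟩ hcontra
        have hrearr : T - a s = ((T + M * j) - a s) - (M : ℤ) * j := by ring
        rw [hrearr]
        exact dvd_sub h5 (Dvd.dvd.mul_right hn'M _)
    calc p ^ L = p ^ c * p ^ e := by rw [hLdef, pow_add]; ring
      _ ≤ ∑ j ∈ Finset.range (p ^ c),
          ((Finset.univ.filter fun s : Fin k => (n s : ℤ) ∣ ((T + M * j) - a s)).card) := h1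
      _ = ∑ j ∈ Finset.range (p ^ c), ∑ s : Fin k, (if (n s : ℤ) ∣ ((T + M * j) - a s) then 1 else 0) :=
          Finset.sum_congr rfl fun j _ => Finset.card_filter _ _
      _ = ∑ s : Fin k, ∑ j ∈ Finset.range (p ^ c), (if (n s : ℤ) ∣ ((T + M * j) - a s) then 1 else 0) :=
          Finset.sum_comm
      _ = ∑ s : Fin k, if (n' s : ℤ) ∣ (T - a s) then p ^ (c - γ s) else 0 :=
          Finset.sum_congr rfl fun s _ => h4 s
      _ = ∑ s ∈ Finset.univ.filter (fun s : Fin k => (n' s : ℤ) ∣ (T - a s)), p ^ (c - γ s) :=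
          (Finset.sum_filter _ _).symm
  -- Step A : (X^R - 1) divides Pl
  set θ : F := σ ^ (p ^ L) with hθdef
  have hθprim : IsPrimitiveRoot θ M :=
    hσ.pow_of_coprime _ (Nat.Coprime.pow_left _ (hp.coprime_iff_not_dvd.mpr hpM))
  have hinj : ∀ i ∈ Finset.range M, ∀ j ∈ Finset.range M, θ ^ i = θ ^ j → i = j := by
    intro i hi j hj hij
    exact hθprim.pow_inj (Finset.mem_range.mp hi) (Finset.mem_range.mp hj) hij
  have himg : Polynomial.nthRootsFinset M (1 : F) = (Finset.range M).image (fun t => θ ^ t) := by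
    symm
    apply Finset.eq_of_subset_of_card_le
    · intro x hx
      obtain ⟨t, ht, rfl⟩ := Finset.mem_image.mp hx
      refine (Polynomial.mem_nthRootsFinset hMpos (1 : F)).mpr ?_
      rw [← pow_mul, mul_comm, pow_mul, hθprim.pow_eq_one, one_pow]
    · rw [hθprim.card_nthRootsFinset, Finset.card_image_of_injOn
        (fun i hi j hj hij => hinj i (by simpa using hi) j (by simpa using hj) hij),
        Finset.card_range]
  have hfacM : (Polynomial.X ^ M - 1 : Polynomial F)
      = ∏ t ∈ Finset.range M, (Polynomial.X - Polynomial.C (θ ^ t)) := by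
    rw [Polynomial.X_pow_sub_one_eq_prod hMpos hθprim, himg, Finset.prod_image hinj]
  have hfacR : (Polynomial.X ^ R - 1 : Polynomial F)
      = ∏ t ∈ Finset.range M, (Polynomial.X ^ (p ^ L) - Polynomial.C (θ ^ t)) := by
    have h := congrArg (Polynomial.expand F (p ^ L)) hfacM
    rw [map_sub, map_pow, Polynomial.expand_X, map_one, map_prod] at h
    rw [← pow_mul] at h
    rw [hRdef, h]
    apply Finset.prod_congr rfl
    intro t _
    rw [map_sub, Polynomial.expand_X, Polynomial.expand_C]
  have hper : ∀ t ∈ Finset.range M,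
      (Polynomial.X ^ (p ^ L) - Polynomial.C (θ ^ t)) ∣ Pl := by
    intro t _
    set τ : F := ((σu ^ t : Fˣ) : F) with hτdef
    have hτσ : τ = σ ^ t := by rw [hτdef, ← hσuval]; push_cast; rfl
    have hXθ : (Polynomial.X ^ (p ^ L) - Polynomial.C (θ ^ t) : Polynomial F)
        = (Polynomial.X - Polynomial.C τ) ^ (p ^ L) := by
      have h1 : θ ^ t = τ ^ (p ^ L) := by
        rw [hθdef, hτσ, ← pow_mul, ← pow_mul, mul_comm]
      rw [h1, sub_pow_char_pow, ← Polynomial.C_pow]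
    set Ct : Finset (Fin k) := Finset.univ.filter (fun s : Fin k => (n' s : ℤ) ∣ ((t : ℤ) - a s)) with hCtdef
    have hsdvd : ∀ s ∈ Ct, (Polynomial.X - Polynomial.C τ) ^ (p ^ (c - γ s))
        ∣ (1 - Polynomial.C (cc s) * Polynomial.X ^ (b s)) := by
      intro s hs
      obtain ⟨u, hu⟩ := (Finset.mem_filter.mp hs).2
      set ρ : F := ((σu ^ (-(a s) * (d s : ℤ)) : Fˣ) : F) with hρdef
      have hroot : (Polynomial.X - Polynomial.C τ) ∣ (1 - Polynomial.C ρ * Polynomial.X ^ (d s)) := by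
        rw [Polynomial.dvd_iff_isRoot]
        have hτds : τ ^ (d s) = ((σu ^ ((t : ℤ) * (d s : ℤ)) : Fˣ) : F) := by
          have hcst : ((t * d s : ℕ) : ℤ) = (t : ℤ) * (d s : ℤ) := by push_cast; ring
          rw [hτdef, ← Units.val_pow_eq_pow_val, ← pow_mul, ← zpow_natCast σu (t * d s), hcst]
        have hτpow : ρ * τ ^ (d s)
            = ((σu ^ (-(a s) * (d s : ℤ) + (t : ℤ) * (d s : ℤ)) : Fˣ) : F) := by
          rw [hρdef, hτds, ← Units.val_mul, ← zpow_add]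
        have hexp : -(a s) * (d s : ℤ) + (t : ℤ) * (d s : ℤ) = (M : ℤ) * (u * (m' s : ℤ)) := by
          have hMn' : (M : ℤ) = (n' s : ℤ) * ((M / n' s : ℕ) : ℤ) := by
            exact_mod_cast (Nat.mul_div_cancel' (hn'dvdM s)).symm
          calc -(a s) * (d s : ℤ) + (t : ℤ) * (d s : ℤ) = ((t : ℤ) - a s) * (d s : ℤ) := by ring
            _ = ((n' s : ℤ) * u) * (d s : ℤ) := by rw [hu]
            _ = (M : ℤ) * (u * (m' s : ℤ)) := by
                have hds2 : (d s : ℤ) = (m' s : ℤ) * ((M / n' s : ℕ) : ℤ) := by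
                  rw [hddef]
                  exact Nat.cast_mul _ _
                rw [hds2, hMn']
                ring
        simp only [Polynomial.IsRoot, Polynomial.eval_sub, Polynomial.eval_one,
          Polynomial.eval_mul, Polynomial.eval_pow, Polynomial.eval_C, Polynomial.eval_X]
        rw [hτpow, hexp, hσuM]
        simp
      have hpowfac : (1 - Polynomial.C ρ * Polynomial.X ^ (d s)) ^ (p ^ (c - γ s))
          = 1 - Polynomial.C (cc s) * Polynomial.X ^ (b s) := by
        rw [sub_pow_char_pow, one_pow, mul_pow, ← Polynomial.C_pow, ← pow_mul]
        have hccval : ρ ^ (p ^ (c - γ s)) = cc s := by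
          rw [hρdef, hccdef]
          rw [← Units.val_pow_eq_pow_val]
          congr 1
          rw [← zpow_natCast (σu ^ (-(a s) * (d s : ℤ))) (p ^ (c - γ s)), ← zpow_mul]
          congr 1
          have : (b s : ℤ) = (d s : ℤ) * ((p ^ (c - γ s) : ℕ) : ℤ) := by
            rw [hbdef]; push_cast; ring
          rw [this]
          ring
        rw [hccval, hbdef]
      calc (Polynomial.X - Polynomial.C τ) ^ (p ^ (c - γ s))
          ∣ (1 - Polynomial.C ρ * Polynomial.X ^ (d s)) ^ (p ^ (c - γ s)) :=
            pow_dvd_pow_of_dvd hroot _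
        _ = 1 - Polynomial.C (cc s) * Polynomial.X ^ (b s) := hpowfac
    have hchain : (Polynomial.X - Polynomial.C τ) ^ (p ^ L) ∣ Pl := by
      have d1 : (Polynomial.X - Polynomial.C τ) ^ (p ^ L)
          ∣ (Polynomial.X - Polynomial.C τ) ^ (∑ s ∈ Ct, p ^ (c - γ s)) :=
        pow_dvd_pow _ (hB (t : ℤ))
      have d2 : (Polynomial.X - Polynomial.C τ) ^ (∑ s ∈ Ct, p ^ (c - γ s))
          = ∏ s ∈ Ct, (Polynomial.X - Polynomial.C τ) ^ (p ^ (c - γ s)) :=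
        (Finset.prod_pow_eq_pow_sum _ _ _).symm
      have d3 : (∏ s ∈ Ct, (1 - Polynomial.C (cc s) * Polynomial.X ^ (b s))) ∣ Pl :=
        Finset.prod_dvd_prod_of_subset _ _ _ (Finset.subset_univ _)
      exact ((d1.trans (d2 ▸ Finset.prod_dvd_prod_of_dvd _ _ hsdvd))).trans d3
    rwa [hXθ]
  have hpair : Set.Pairwise ↑(Finset.range M)
      (Function.onFun IsCoprime fun t : ℕ => (Polynomial.X ^ (p ^ L) - Polynomial.C (θ ^ t) : Polynomial F)) := by
    intro i hi j hj hij
    have hne : θ ^ j - θ ^ i ≠ 0 := by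
      rw [sub_ne_zero]
      intro hEq
      exact hij (hinj j (by simpa using hj) i (by simpa using hi) hEq).symm
    refine ⟨Polynomial.C (θ ^ j - θ ^ i)⁻¹, -(Polynomial.C (θ ^ j - θ ^ i)⁻¹), ?_⟩
    have hsub : (Polynomial.X ^ (p ^ L) - Polynomial.C (θ ^ i) : Polynomial F)
        - (Polynomial.X ^ (p ^ L) - Polynomial.C (θ ^ j)) = Polynomial.C (θ ^ j - θ ^ i) := by
      rw [map_sub]
      ring
    calc Polynomial.C (θ ^ j - θ ^ i)⁻¹ * (Polynomial.X ^ (p ^ L) - Polynomial.C (θ ^ i))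
          + -(Polynomial.C (θ ^ j - θ ^ i)⁻¹) * (Polynomial.X ^ (p ^ L) - Polynomial.C (θ ^ j))
        = Polynomial.C (θ ^ j - θ ^ i)⁻¹ * Polynomial.C (θ ^ j - θ ^ i) := by rw [← hsub]; ring
      _ = 1 := by rw [← Polynomial.C_mul, inv_mul_cancel₀ hne, Polynomial.C_1]
  have hdvdPl : (Polynomial.X ^ R - 1 : Polynomial F) ∣ Pl := by
    rw [hfacR]
    exact Finset.prod_dvd_of_coprime hpair hper
  -- Step C : extraction of the constant coefficient mod X^R - 1
  haveI : NeZero R := ⟨hRpos.ne'⟩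
  set φ : Polynomial F →+* AddMonoidAlgebra F (ZMod R) :=
    Polynomial.eval₂RingHom (AddMonoidAlgebra.singleZeroRingHom)
      (AddMonoidAlgebra.single (1 : ZMod R) (1 : F)) with hφdef
  have hφX : φ Polynomial.X = AddMonoidAlgebra.single (1 : ZMod R) 1 := Polynomial.eval₂_X _ _
  have hφC : ∀ x : F, φ (Polynomial.C x) = AddMonoidAlgebra.single 0 x := fun x =>
    Polynomial.eval₂_C _ _
  have hφXn : ∀ N : ℕ, φ (Polynomial.X ^ N) = AddMonoidAlgebra.single ((N : ZMod R)) 1 := by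
    intro N
    rw [map_pow, hφX, AddMonoidAlgebra.single_pow, one_pow]
    congr 1
    rw [nsmul_eq_mul, mul_one]
  have hφR : φ (Polynomial.X ^ R - 1) = 0 := by
    rw [map_sub, map_one, hφXn]
    rw [ZMod.natCast_self]
    rw [AddMonoidAlgebra.one_def]
    simp
  have hφPl0 : φ Pl = 0 := by
    obtain ⟨Q, hQ⟩ := hdvdPl
    rw [hQ, map_mul, hφR, zero_mul]
  have hφPl : φ Pl = ∑ I ∈ (Finset.univ : Finset (Fin k)).powerset,
      AddMonoidAlgebra.single (∑ s ∈ I, ((b s : ZMod R))) (∏ s ∈ I, (-(cc s))) := by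
    rw [hPldef, map_prod]
    have hone : ∀ s : Fin k, φ (1 - Polynomial.C (cc s) * Polynomial.X ^ (b s))
        = AddMonoidAlgebra.single ((b s : ZMod R)) (-(cc s)) + 1 := by
      intro s
      rw [map_sub, map_one, map_mul, hφC, hφXn, AddMonoidAlgebra.single_mul_single,
        zero_add, mul_one]
      rw [show AddMonoidAlgebra.single ((b s : ZMod R)) (-(cc s))
        = -(AddMonoidAlgebra.single ((b s : ZMod R)) (cc s)) from AddMonoidAlgebra.single_neg _ _]
      ring
    rw [Finset.prod_congr rfl fun s _ => hone s, Finset.prod_add]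
    apply Finset.sum_congr rfl
    intro I hI
    rw [Finset.prod_const_one, mul_one, AddMonoidAlgebra.prod_single]
  have hzero : (0 : F) = ∑ I ∈ (Finset.univ : Finset (Fin k)).powerset,
      (if (∑ s ∈ I, ((b s : ZMod R))) = 0 then (∏ s ∈ I, (-(cc s))) else 0) := by
    have h := hφPl0.symm.trans hφPl
    have h2 := congrArg (fun f : AddMonoidAlgebra F (ZMod R) => f.coeff 0) h
    simp only [AddMonoidAlgebra.coeff_zero, AddMonoidAlgebra.coeff_sum, AddMonoidAlgebra.coeff_single, Finsupp.coe_zero, Pi.zero_apply] at h2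
    rw [Finset.sum_apply'] at h2
    refine h2.trans (Finset.sum_congr rfl fun I hI => ?_)
    rw [Finsupp.single_apply]
  rw [Finset.sum_eq_single (∅ : Finset (Fin k))] at hzero
  · simp at hzero
  · intro I hI hIne
    have hInonempty : I.Nonempty := Finset.nonempty_iff_ne_empty.mpr hIne
    rw [if_neg]
    intro hdvd0
    apply hcon I hInonempty
    rw [← Nat.cast_sum] at hdvd0
    exact (ZMod.natCast_eq_zero_iff _ _).mp hdvd0
  · intro hmem
    exact absurd (Finset.mem_powerset.mpr (Finset.empty_subset _)) hmem

/-- **Corollary 2.2, first part.**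
If `{a s (n s)}_{s=1}^k` is an `m`-cover of `ℤ` with `m = p^e` a prime power, then
`∑_{s∈I} m_s/n_s ∈ m ℤ` for some nonempty `I ⊆ {1,…,k}`. -/
theorem stmt4 (p : ℕ) (hp : p.Prime) (e : ℕ)
    (k : ℕ) (a : Fin k → ℤ) (n : Fin k → ℕ) (hn : ∀ s, 0 < n s)
    (hcover : ∀ x : ℤ,
      p ^ e ≤ (Finset.univ.filter fun s : Fin k => (n s : ℤ) ∣ x - a s).card)
    (m : Fin k → ℤ) :
    ∃ I : Finset (Fin k), I.Nonempty ∧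
      ∃ z : ℤ, ∑ s ∈ I, (m s : ℚ) / (n s : ℚ) = (p : ℚ) ^ e * z := by
  classical
  set m' : Fin k → ℕ := fun s => (m s + ((m s).natAbs + 1) * ((p : ℤ) ^ e * (n s : ℤ))).toNat
    with hm'def
  have hm' : ∀ s, (m' s : ℤ) = m s + ((m s).natAbs + 1) * ((p : ℤ) ^ e * (n s : ℤ)) := by
    intro s
    rw [hm'def]
    apply Int.toNat_of_nonneg
    have h1 : (1 : ℤ) ≤ (p : ℤ) ^ e * (n s : ℤ) := by
      have hx : (0 : ℤ) < (p : ℤ) ^ e * (n s : ℤ) :=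
        mul_pos (pow_pos (by exact_mod_cast hp.pos) e) (by exact_mod_cast hn s)
      linarith
    have h2 : (((m s).natAbs : ℤ) + 1) ≤ (((m s).natAbs : ℤ) + 1) * ((p : ℤ) ^ e * (n s : ℤ)) :=
      le_mul_of_one_le_right (by positivity) h1
    have h3 : -(m s) ≤ ((m s).natAbs : ℤ) := by omega
    linarith
  obtain ⟨I, hI, z, hz⟩ := aux_main p hp e k a n hn hcover m'
  refine ⟨I, hI, z - ∑ s ∈ I, (((m s).natAbs : ℤ) + 1), ?_⟩
  have hWI : ((∑ s ∈ I, (((m s).natAbs : ℤ) + 1) : ℤ) : ℚ) = ∑ s ∈ I, (((m s).natAbs : ℚ) + 1) := by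
    rw [Int.cast_sum]
    exact Finset.sum_congr rfl fun s _ => by
      simp only [Int.cast_add, Int.cast_natCast, Int.cast_one]
  have hterm : ∀ s : Fin k, (m s : ℚ) / (n s : ℚ)
      = (m' s : ℚ) / (n s : ℚ) - (((m s).natAbs : ℚ) + 1) * (p : ℚ) ^ e := by
    intro s
    have hn0 : (n s : ℚ) ≠ 0 := by
      exact_mod_cast (hn s).ne'
    have hZ : (m' s : ℚ) = (m s : ℚ) + (((m s).natAbs : ℚ) + 1) * ((p : ℚ) ^ e * (n s : ℚ)) := by
      have h2 : ((m' s : ℤ) : ℚ)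
          = ((m s + ((m s).natAbs + 1) * ((p : ℤ) ^ e * (n s : ℤ)) : ℤ) : ℚ) := by
        rw [hm' s]
      rw [Int.cast_natCast] at h2
      rw [h2]
      simp only [Int.cast_add, Int.cast_mul, Int.cast_pow, Int.cast_natCast, Int.cast_one]
    rw [hZ]
    field_simp
    ring
  rw [Finset.sum_congr rfl fun s _ => hterm s, Finset.sum_sub_distrib, hz, ← Finset.sum_mul]
  rw [Int.cast_sub, hWI]
  ring
end

section
/- Let p be a prime and n, h ∈ ℕ. Consider a loopless multigraph with l vertices v_1,...,v_l and edge set {1,...,k}, given by incidence numbers δ_{st} ∈ {0,1} (for 1 ≤ s ≤ k, 1 ≤ t ≤ l) with Σ_{t=1}^l δ_{st} = 2 for each edge s, and suppose every vertex has degree d(v_t) = Σ_{s=1}^k δ_{st} ≤ 2p^n − 1. Suppose also that {a_s(n_s)}_{s=1}^k forms an (l(p^n − 1) + p^h)-cover of ℤ, and let m_1,...,m_k ∈ ℤ. Then there exists a nonempty set of edges I ⊆ {1,...,k} with Σ_{s∈I} m_s/n_s ∈ p^h ℤ such that for every t ∈ {1,...,l}, Σ_{s∈I} δ_{st} is either 0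 or p^n (i.e., I spans a p^n-regular subgraph). -/
open Finset Pointwise

section SpanProd
variable {R : Type*} [CommRing R] {ι : Type*} [DecidableEq ι]

private lemma mem_set_prod (C : Finset ι) (S : ι → Set R) {x : R} (hx : x ∈ ∏ s ∈ C, S s) :
    ∃ ch : ι → R, (∀ s ∈ C, ch s ∈ S s) ∧ x = ∏ s ∈ C, ch s := by
  classical
  induction C using Finset.induction_on generalizing x with
  | empty =>
      refine ⟨fun _ => 1, by simp, ?_⟩
      simp only [Finset.prod_empty] at hx ⊢
      simpa using hx
  | @insert a C ha ih =>
      rw [Finset.prod_insert ha] at hx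
      obtain ⟨y, hy, z, hz, rfl⟩ := Set.mem_mul.mp hx
      obtain ⟨ch, hch, rfl⟩ := ih hz
      refine ⟨Function.update ch a y, ?_, ?_⟩
      · intro s hs
        rcases Finset.mem_insert.mp hs with h1 | h2
        · subst h1; simpa using hy
        · have hne : s ≠ a := by rintro rfl; exact ha h2
          rw [Function.update_of_ne hne]
          exact hch s h2
      · rw [Finset.prod_insert ha, Function.update_self]
        congr 1
        refine Finset.prod_congr rfl fun s hs2 => ?_
        have hne : s ≠ a := by rintro rfl; exact ha hs2
        exact (Function.update_of_ne hne _ _).symm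

private lemma prod_mem_span_prod (C : Finset ι) (F : ι → R) (S : ι → Set R)
    (h : ∀ s ∈ C, F s ∈ Ideal.span (S s)) :
    ∏ s ∈ C, F s ∈ Ideal.span (∏ s ∈ C, S s) := by
  classical
  induction C using Finset.induction_on with
  | empty => simpa using Ideal.subset_span (by simp [Set.one_def] : (1:R) ∈ (1 : Set R))
  | @insert a C ha ih =>
      rw [Finset.prod_insert ha, Finset.prod_insert ha, ← Ideal.span_mul_span']
      exact Ideal.mul_mem_mul (h a (Finset.mem_insert_self a C))
        (ih fun s hs => h s (Finset.mem_insert_of_mem hs))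

private lemma one_sub_prod_mem (T : Finset ι) (x : ι → R) :
    1 - ∏ i ∈ T, x i ∈ Ideal.span {y | ∃ i ∈ T, y = 1 - x i} := by
  classical
  induction T using Finset.induction_on with
  | empty => simp
  | @insert a T ha ih =>
      rw [Finset.prod_insert ha]
      have key : 1 - x a * ∏ i ∈ T, x i = (1 - x a) + x a * (1 - ∏ i ∈ T, x i) := by ring
      rw [key]
      refine Ideal.add_mem _ ?_ ?_
      · exact Ideal.subset_span ⟨a, Finset.mem_insert_self a T, rfl⟩
      · refine Ideal.mul_mem_left _ _ (Ideal.span_mono ?_ ih)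
        rintro y ⟨i, hi, rfl⟩
        exact ⟨i, Finset.mem_insert_of_mem hi, rfl⟩
end SpanProd

section Expand
variable {R : Type*} [CommRing R] {Γ : Type*} [AddCommGroup Γ] [DecidableEq Γ]
variable {ι : Type*} [DecidableEq ι]

private lemma expand_prod_one_sub_single (C : Finset ι) (g : ι → Γ) (ρ : ι → R) :
    ∏ s ∈ C, (1 - AddMonoidAlgebra.single (g s) (ρ s)) =
      ∑ T ∈ C.powerset, AddMonoidAlgebra.single (∑ s ∈ T, g s)
        ((-1 : R) ^ T.card * ∏ s ∈ T, ρ s) := by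
  classical
  have h : ∀ s ∈ C, (1 - AddMonoidAlgebra.single (g s) (ρ s)) =
      (-AddMonoidAlgebra.single (g s) (ρ s)) + 1 := by intros; ring
  rw [Finset.prod_congr rfl h, Finset.prod_add]
  refine Finset.sum_congr rfl fun T hT => ?_
  rw [Finset.prod_const_one, mul_one]
  have h1 : ∏ s ∈ T, (-AddMonoidAlgebra.single (g s) (ρ s)) =
      (-1 : AddMonoidAlgebra R Γ) ^ T.card * ∏ s ∈ T, AddMonoidAlgebra.single (g s) (ρ s) := by
    rw [← Finset.prod_const, ← Finset.prod_mul_distrib]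
    exact Finset.prod_congr rfl fun s _ => by ring
  have h2 : (-1 : AddMonoidAlgebra R Γ) = AddMonoidAlgebra.single 0 (-1 : R) := by
    rw [AddMonoidAlgebra.one_def, ← AddMonoidAlgebra.single_neg]
  rw [h1, h2, AddMonoidAlgebra.single_pow, AddMonoidAlgebra.prod_single,
    AddMonoidAlgebra.single_mul_single, smul_zero, zero_add]

private lemma coeff_prod_one_sub_single (C : Finset ι) (g : ι → Γ) (ρ : ι → R) (γ : Γ) :
    (∏ s ∈ C, (1 - AddMonoidAlgebra.single (g s) (ρ s))).coeff γ =
      ∑ T ∈ C.powerset, (if (∑ s ∈ T, g s) = γ then (-1 : R) ^ T.card * ∏ s ∈ T, ρ s else 0) := by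
  classical
  rw [expand_prod_one_sub_single, AddMonoidAlgebra.coeff_sum, Finset.sum_apply']
  exact Finset.sum_congr rfl fun T _ => by rw [AddMonoidAlgebra.coeff_single, Finsupp.single_apply]
end Expand

section Zero
variable (p : ℕ) [Fact p.Prime] (l nn E : ℕ)

local notation "Rp" => AddMonoidAlgebra (ZMod p) ((Fin l → ZMod (p^nn)) × ZMod (p^E))

noncomputable def uu (i : Fin l) : Rp := AddMonoidAlgebra.single (Pi.single i 1, 0) 1
noncomputable def ww : Rp := AddMonoidAlgebra.single (0, 1) 1

private lemma charP_Rp : CharP Rp p := by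
  have hinj : Function.Injective (AddMonoidAlgebra.singleZeroRingHom :
      ZMod p →+* Rp) := fun a b hab => by
    exact Finsupp.single_injective (0 : (Fin l → ZMod (p^nn)) × ZMod (p^E)) (by simpa using congrArg AddMonoidAlgebra.coeff hab)
  exact charP_of_injective_ringHom hinj p

private lemma uu_pow_vanish (i : Fin l) : (1 - uu p l nn E i) ^ (p^nn) = 0 := by
  haveI := charP_Rp p l nn E
  rw [sub_pow_char_pow, one_pow, uu, AddMonoidAlgebra.single_pow, one_pow]
  have h0 : (p^nn) • ((Pi.single i 1 : Fin l → ZMod (p^nn)), (0 : ZMod (p^E))) = 0 := by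
    rw [Prod.smul_mk, smul_zero]
    refine Prod.ext ?_ rfl
    ext t
    simp only [Pi.smul_apply, Pi.single_apply]
    split <;> simp [ZMod.natCast_self]
  rw [h0, ← AddMonoidAlgebra.one_def, sub_self]

private lemma ww_pow_vanish : (1 - ww p l nn E) ^ (p^E) = 0 := by
  haveI := charP_Rp p l nn E
  rw [sub_pow_char_pow, one_pow, ww, AddMonoidAlgebra.single_pow, one_pow]
  have h0 : (p^E) • ((0 : Fin l → ZMod (p^nn)), (1 : ZMod (p^E))) = 0 := by
    rw [Prod.smul_mk, smul_zero]
    refine Prod.ext rfl ?_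
    simp [ZMod.natCast_self]
  rw [h0, ← AddMonoidAlgebra.one_def, sub_self]

noncomputable def Gset (V : Finset (Fin l)) (c : ℕ) : Set Rp :=
  {y | ∃ i ∈ V, y = 1 - uu p l nn E i} ∪ {(1 - ww p l nn E)^(p^c)}

private lemma mem_Gset_span (g : (Fin l → ZMod (p^nn)) × ZMod (p^E)) (V : Finset (Fin l)) (c : ℕ)
    (h1 : g.1 = ∑ i ∈ V, Pi.single i 1)
    (h2 : ∃ γ : ZMod (p^E), g.2 = (p^c : ℕ) * γ) :
    1 - AddMonoidAlgebra.single g (1 : ZMod p) ∈ Ideal.span (Gset p l nn E V c) := by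
  classical
  haveI := charP_Rp p l nn E
  haveI : NeZero (p^E) := ⟨pow_ne_zero _ (Fact.out : p.Prime).ne_zero⟩
  obtain ⟨γ, hγ⟩ := h2
  set X : Rp := AddMonoidAlgebra.single (g.1, 0) 1 with hX
  set Y : Rp := AddMonoidAlgebra.single (0, g.2) 1 with hY
  have hsplit : AddMonoidAlgebra.single g (1 : ZMod p) = X * Y := by
    rw [hX, hY, AddMonoidAlgebra.single_mul_single, mul_one]
    congr 1
    exact (Prod.ext (by simp) (by simp)).symm
  have hXprod : X = ∏ i ∈ V, uu p l nn E i := by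
    rw [hX]
    unfold uu
    rw [AddMonoidAlgebra.prod_single, Finset.prod_const_one]
    congr 1
    refine Prod.ext ?_ ?_
    · rw [Prod.fst_sum]; simpa using h1
    · rw [Prod.snd_sum]; simp
  have hwval : (AddMonoidAlgebra.single ((0 : Fin l → ZMod (p^nn)), γ) (1 : ZMod p)) =
      (ww p l nn E) ^ (γ.val) := by
    rw [ww, AddMonoidAlgebra.single_pow, one_pow]
    congr 1
    rw [Prod.smul_mk, smul_zero]
    refine Prod.ext rfl ?_
    show γ = γ.val • (1 : ZMod (p^E))
    rw [nsmul_eq_mul, mul_one, ZMod.natCast_val, ZMod.cast_id]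
    try rfl
  have hYpow : Y = ((ww p l nn E) ^ (γ.val)) ^ (p^c) := by
    rw [← hwval, AddMonoidAlgebra.single_pow, one_pow, hY]
    congr 1
    rw [Prod.smul_mk, smul_zero]
    refine Prod.ext rfl ?_
    show g.2 = (p^c) • γ
    rw [nsmul_eq_mul, hγ]
  have hgeom : 1 - (ww p l nn E) ^ (γ.val) =
      (∑ i ∈ Finset.range γ.val, (ww p l nn E)^i) * (1 - ww p l nn E) := by
    have := geom_sum_mul (ww p l nn E) γ.val
    linear_combination this
  have hOneSubY : 1 - Y =
      ((∑ i ∈ Finset.range γ.val, (ww p l nn E)^i))^(p^c) * ((1 - ww p l nn E))^(p^c) := by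
    have h2 := sub_pow_char_pow (1 : Rp) ((ww p l nn E) ^ (γ.val)) c (p := p)
    rw [one_pow] at h2
    rw [hYpow, ← h2, hgeom, mul_pow]
  have key : 1 - X * Y = (1 - X) + X * (1 - Y) := by ring
  rw [hsplit, key]
  refine Ideal.add_mem _ ?_ ?_
  · refine Ideal.span_mono Set.subset_union_left ?_
    rw [hXprod]
    exact one_sub_prod_mem V (uu p l nn E)
  · refine Ideal.span_mono Set.subset_union_right ?_
    refine Ideal.mem_span_singleton'.mpr ⟨X * ((∑ i ∈ Finset.range γ.val, (ww p l nn E)^i))^(p^c), ?_⟩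
    rw [hOneSubY]
    ring

private lemma prod_one_sub_single_eq_zero
    {ι : Type*} [DecidableEq ι] (C : Finset ι)
    (g : ι → (Fin l → ZMod (p^nn)) × ZMod (p^E)) (V : ι → Finset (Fin l)) (cc : ι → ℕ)
    (hg1 : ∀ s ∈ C, (g s).1 = ∑ i ∈ V s, Pi.single i 1)
    (hg2 : ∀ s ∈ C, ∃ γ, (g s).2 = (p^(cc s) : ℕ) * γ)
    (hcount : ∀ φ : ι → Option (Fin l),
      (∀ s ∈ C, ∀ i, φ s = some i → i ∈ V s) →
      (∀ i, ((C.filter (fun s => φ s = some i)).card ≤ p^nn - 1)) →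
      p^E ≤ ∑ s ∈ C.filter (fun s => φ s = none), p^(cc s)) :
    ∏ s ∈ C, (1 - AddMonoidAlgebra.single (g s) (1 : ZMod p)) = 0 := by
  classical
  have hmem : ∀ s ∈ C, 1 - AddMonoidAlgebra.single (g s) (1 : ZMod p) ∈
      Ideal.span (Gset p l nn E (V s) (cc s)) :=
    fun s hs => mem_Gset_span p l nn E (g s) (V s) (cc s) (hg1 s hs) (hg2 s hs)
  have hprodmem := prod_mem_span_prod C _ (fun s => Gset p l nn E (V s) (cc s)) hmem
  have hbot : Ideal.span (∏ s ∈ C, Gset p l nn E (V s) (cc s)) = ⊥ := by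
    rw [Ideal.span_eq_bot]
    intro x hx
    obtain ⟨ch, hch, rfl⟩ := mem_set_prod C _ hx
    -- build choice function
    set φ : ι → Option (Fin l) := fun s =>
      if h : (∃ i ∈ V s, ch s = 1 - uu p l nn E i) then some h.choose else none with hφ
    have φ1 : ∀ s, ∀ i, φ s = some i → i ∈ V s ∧ ch s = 1 - uu p l nn E i := by
      intro s i hsome
      replace hsome : (if h : (∃ i ∈ V s, ch s = 1 - uu p l nn E i) then
          some h.choose else none) = some i := hsome
      split at hsome
      · next h =>
          obtain rfl : h.choose = i := Option.some.inj hsome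
          exact h.choose_spec
      · next h => exact absurd hsome (by simp)
    have φ2 : ∀ s ∈ C, φ s = none → ch s = (1 - ww p l nn E)^(p^(cc s)) := by
      intro s hs hnone
      replace hnone : (if h : (∃ i ∈ V s, ch s = 1 - uu p l nn E i) then
          some h.choose else none) = none := hnone
      split at hnone
      · next h => exact absurd hnone (by simp)
      · next h =>
          rcases hch s hs with hL | hR
          · exact absurd hL h
          · simpa using hR
    by_cases hA : ∃ i, p^nn ≤ (C.filter (fun s => φ s = some i)).card
    · obtain ⟨i, hi⟩ := hA
      rw [← Finset.prod_filter_mul_prod_filter_not C (fun s => φ s = some i) ch]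
      have hT : ∏ s ∈ C.filter (fun s => φ s = some i), ch s
          = (1 - uu p l nn E i) ^ (C.filter (fun s => φ s = some i)).card := by
        rw [← Finset.prod_const]
        refine Finset.prod_congr rfl fun s hs => ?_
        exact (φ1 s i (Finset.mem_filter.mp hs).2).2
      rw [hT, ← Nat.add_sub_cancel' hi, pow_add, uu_pow_vanish, zero_mul, zero_mul]
    · push_neg at hA
      have hA' : ∀ i, (C.filter (fun s => φ s = some i)).card ≤ p^nn - 1 :=
        fun i => Nat.le_sub_one_of_lt (hA i)
      have hsum := hcount φ (fun s _ i h => (φ1 s i h).1) hA'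
      rw [← Finset.prod_filter_mul_prod_filter_not C (fun s => φ s = none) ch]
      have hT0 : ∏ s ∈ C.filter (fun s => φ s = none), ch s
          = (1 - ww p l nn E) ^ (∑ s ∈ C.filter (fun s => φ s = none), p^(cc s)) := by
        rw [← Finset.prod_pow_eq_pow_sum]
        refine Finset.prod_congr rfl fun s hs => ?_
        exact φ2 s (Finset.mem_filter.mp hs).1 (Finset.mem_filter.mp hs).2
      rw [hT0, ← Nat.add_sub_cancel' hsum, pow_add, ww_pow_vanish, zero_mul, zero_mul]
  rw [hbot] at hprodmem
  simpa using hprodmem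
end Zero


private lemma card_filter_mod (P K r : ℕ) (hr : r < P) :
    ((Finset.range (P*K)).filter fun j => j % P = r).card = K := by
  have hP : 0 < P := Nat.pos_of_ne_zero (by rintro rfl; exact Nat.not_lt_zero r hr)
  have key : ((Finset.range (P*K)).filter fun j => j % P = r).card = (Finset.range K).card := by
    apply Finset.card_bij' (fun j _ => j / P) (fun t _ => r + P * t)
    · intro j hj
      obtain ⟨hjr, hjm⟩ := Finset.mem_filter.mp hj
      rw [Finset.mem_range] at hjr ⊢
      exact Nat.div_lt_of_lt_mul hjr
    · intro t ht
      rw [Finset.mem_range] at ht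
      refine Finset.mem_filter.mpr ⟨Finset.mem_range.mpr ?_, ?_⟩
      · calc r + P * t < P + P * t := by omega
          _ = P * (t+1) := by ring
          _ ≤ P * K := Nat.mul_le_mul_left P ht
      · rw [Nat.add_mul_mod_self_left, Nat.mod_eq_of_lt hr]
    · intro j hj
      obtain ⟨_, hjm⟩ := Finset.mem_filter.mp hj
      conv_rhs => rw [← Nat.mod_add_div j P]
      rw [hjm]
    · intro t ht
      rw [Nat.add_mul_div_left _ _ hP, Nat.div_eq_of_lt hr, zero_add]
  rw [key, Finset.card_range]

private lemma count_js (p : ℕ) (hp : p.Prime) (n N : ℕ) (hn : 0 < n) (hN : 0 < N)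
    (hdvd : n ∣ N) (X : ℤ) :
    ((Finset.range (p ^ N.factorization p)).filter
      (fun (j : ℕ) => (n:ℤ) ∣ X + (j:ℤ) * ((N / p ^ N.factorization p : ℕ) : ℤ))).card
      = if ((n / p ^ n.factorization p : ℕ) : ℤ) ∣ X
        then p ^ (N.factorization p - n.factorization p) else 0 := by
  classical
  set e := N.factorization p with he
  set es := n.factorization p with hes
  set P := p ^ es with hP
  set n' := n / P with hn'
  set N' := N / p ^ e with hN'
  have hPpos : 0 < P := pow_pos hp.pos es
  have hn'pos : 0 < n' := Nat.ordCompl_pos p hn.ne'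
  have hsplit : n = P * n' := (Nat.ordProj_mul_ordCompl_eq_self n p).symm
  have hes_le : es ≤ e := by
    have := (Nat.factorization_le_iff_dvd hn.ne' hN.ne').mpr hdvd
    exact this p
  have hpn' : ¬ p ∣ n' := Nat.not_dvd_ordCompl hp hn.ne'
  have hn'N' : n' ∣ N' := Nat.ordCompl_dvd_ordCompl_of_dvd hdvd p
  by_cases hdx : ((n' : ℕ) : ℤ) ∣ X
  · rw [if_pos hdx]
    have hcopP : Nat.Coprime P n' := Nat.Coprime.pow_left es (hp.coprime_iff_not_dvd.mpr hpn')
    have hcond : ∀ j : ℕ, ((n:ℤ) ∣ X + (j:ℤ) * (N' : ℤ)) ↔ ((P:ℤ) ∣ X + (j:ℤ) * (N' : ℤ)) := by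
      intro j
      constructor
      · intro hjd
        refine dvd_trans ?_ hjd
        exact Int.natCast_dvd_natCast.mpr ⟨n', hsplit⟩
      · intro hjd
        have hdn' : ((n' : ℕ) : ℤ) ∣ X + (j:ℤ) * (N' : ℤ) :=
          dvd_add hdx (Dvd.dvd.mul_left (Int.natCast_dvd_natCast.mpr hn'N') _)
        have hcop : IsCoprime ((P:ℕ) : ℤ) ((n' : ℕ) : ℤ) := by
          rw [Int.isCoprime_iff_gcd_eq_one]
          exact_mod_cast hcopP
        have hmul := hcop.mul_dvd hjd hdn'
        rwa [show ((P:ℕ):ℤ) * ((n':ℕ):ℤ) = ((n:ℕ):ℤ) by rw [← Nat.cast_mul, ← hsplit]] at hmul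
    haveI : NeZero P := ⟨hPpos.ne'⟩
    have hpN'2 : ¬ p ∣ N' := Nat.not_dvd_ordCompl hp hN.ne'
    have hcopN'P : Nat.Coprime N' P :=
      Nat.Coprime.pow_right es ((hp.coprime_iff_not_dvd.mpr hpN'2).symm)
    have hu : IsUnit ((N' : ℕ) : ZMod P) := (ZMod.isUnit_iff_coprime N' P).mpr hcopN'P
    set y : (ZMod P)ˣ := hu.unit with hy
    have hyv : ((N' : ℕ) : ZMod P) = ↑y := (IsUnit.unit_spec hu).symm
    set c : ZMod P := (-(X : ZMod P)) * ↑y⁻¹ with hc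
    have hcond2 : ∀ j : ℕ, ((P:ℤ) ∣ X + (j:ℤ) * (N' : ℤ)) ↔ (j % P = c.val) := by
      intro j
      rw [← ZMod.intCast_zmod_eq_zero_iff_dvd]
      push_cast
      rw [hyv]
      constructor
      · intro h0
        have hj : (j : ZMod P) = c := by
          rw [hc]
          rw [Units.eq_mul_inv_iff_mul_eq]
          linear_combination h0
        have : ((j : ℕ) : ZMod P) = ((c.val : ℕ) : ZMod P) := by
          rw [hj, ZMod.natCast_val, ZMod.cast_id]
        have hmod := (ZMod.natCast_eq_natCast_iff _ _ _).mp this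
        rwa [Nat.ModEq, Nat.mod_eq_of_lt (ZMod.val_lt c)] at hmod
      · intro hmod
        have : ((j : ℕ) : ZMod P) = ((c.val : ℕ) : ZMod P) := by
          rw [ZMod.natCast_eq_natCast_iff, Nat.ModEq, Nat.mod_eq_of_lt (ZMod.val_lt c)]
          exact hmod
        rw [ZMod.natCast_val, ZMod.cast_id] at this
        rw [this, hc]
        have : (-(X : ZMod P)) * ↑y⁻¹ * ↑y = -(X : ZMod P) := by
          rw [mul_assoc, Units.inv_mul, mul_one]
        linear_combination this
    have hfe : (Finset.range (p^e)).filter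
        (fun (j : ℕ) => (n:ℤ) ∣ X + (j:ℤ) * (N' : ℤ)) =
        (Finset.range (P * p^(e - es))).filter (fun j => j % P = c.val) := by
      rw [show P * p^(e-es) = p^e by rw [hP, ← pow_add, Nat.add_sub_cancel' hes_le]]
      exact Finset.filter_congr (fun j _ => by rw [hcond j, hcond2 j])
    rw [hfe, card_filter_mod _ _ _ (ZMod.val_lt c)]
  · rw [if_neg hdx]
    rw [Finset.card_eq_zero, Finset.filter_eq_empty_iff]
    intro j _
    intro hjd
    apply hdx
    have h1 : ((n':ℕ):ℤ) ∣ X + (j:ℤ) * (N' : ℤ) :=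
      dvd_trans (Int.natCast_dvd_natCast.mpr (Nat.ordCompl_dvd n p)) hjd
    have h2 : ((n':ℕ):ℤ) ∣ (j:ℤ) * (N' : ℤ) :=
      Dvd.dvd.mul_left (Int.natCast_dvd_natCast.mpr hn'N') _
    have := dvd_sub h1 h2
    simpa using this


section Roots
variable (N' : ℕ)

noncomputable def zeta : ℂ := Complex.exp (2 * Real.pi * Complex.I / N')

private lemma zeta_ne_zero : zeta N' ≠ 0 := Complex.exp_ne_zero _

private lemma zeta_prim (hN' : N' ≠ 0) : IsPrimitiveRoot (zeta N') N' :=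
  Complex.isPrimitiveRoot_exp N' hN'

noncomputable def Zf (c : ℤ) : ℂ := (zeta N') ^ c

private lemma Zf_add (c d : ℤ) : Zf N' (c + d) = Zf N' c * Zf N' d :=
  zpow_add₀ (zeta_ne_zero N') c d

private lemma Zf_zero : Zf N' 0 = 1 := by simp [Zf]

private lemma Zf_one_iff (hN' : N' ≠ 0) (c : ℤ) : Zf N' c = 1 ↔ (N' : ℤ) ∣ c :=
  (zeta_prim N' hN').zpow_eq_one_iff_dvd c

private lemma Zf_natpow (c : ℤ) (x : ℕ) : Zf N' (c * (x:ℤ)) = (Zf N' c) ^ x := by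
  rw [Zf, Zf, zpow_mul, zpow_natCast]

private lemma Zf_pow_N (hN' : N' ≠ 0) (c : ℤ) : (Zf N' c) ^ N' = 1 := by
  rw [← Zf_natpow, mul_comm]
  rw [Zf, zpow_mul]
  have : (zeta N') ^ (N' : ℤ) = 1 := by
    rw [zpow_natCast]; exact (zeta_prim N' hN').pow_eq_one
  rw [this, one_zpow]

private lemma Zf_sum_geom (hN' : N' ≠ 0) (B : ℤ) :
    ∑ x ∈ Finset.range N', (Zf N' B) ^ x = if (N' : ℤ) ∣ B then (N' : ℂ) else 0 := by
  by_cases hd : (N' : ℤ) ∣ B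
  · rw [if_pos hd]
    have h1 : Zf N' B = 1 := (Zf_one_iff N' hN' B).mpr hd
    simp [h1]
  · rw [if_neg hd]
    have h1 : Zf N' B ≠ 1 := fun h => hd ((Zf_one_iff N' hN' B).mp h)
    rw [geom_sum_eq h1, Zf_pow_N N' hN', sub_self, zero_div]

private lemma Zf_integral (hN' : N' ≠ 0) (c : ℤ) : IsIntegral ℤ (Zf N' c) := by
  refine ⟨Polynomial.X ^ N' - Polynomial.C 1, Polynomial.monic_X_pow_sub_C 1 hN', ?_⟩
  simp [Polynomial.eval₂, Zf_pow_N N' hN' c]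

end Roots

private lemma dvd_of_isIntegral_div (p N' : ℕ) (hp : 0 < p) (γ : ℂ)
    (hint : IsIntegral ℤ γ) (heq : (N' : ℂ) = (p : ℂ) * γ) : p ∣ N' := by
  have hpne : (p : ℂ) ≠ 0 := Nat.cast_ne_zero.mpr hp.ne'
  have hpq : (p : ℚ) ≠ 0 := Nat.cast_ne_zero.mpr hp.ne'
  have h2 : (algebraMap ℚ ℂ) ((N' : ℚ) / (p : ℚ)) = (N' : ℂ) / (p : ℂ) := by
    rw [map_div₀]; norm_num
  have hγ : γ = algebraMap ℚ ℂ ((N' : ℚ) / (p : ℚ)) := by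
    rw [h2, eq_div_iff hpne]
    linear_combination -heq
  have hint2 : IsIntegral ℤ ((N' : ℚ) / (p : ℚ)) := by
    rw [hγ] at hint
    exact (isIntegral_algebraMap_iff ((algebraMap ℚ ℂ).injective)).mp hint
  obtain ⟨z, hz⟩ := IsIntegrallyClosed.isIntegral_iff.mp hint2
  have hzq : (z : ℚ) * (p : ℚ) = (N' : ℚ) := by
    have : (algebraMap ℤ ℚ) z = (z : ℚ) := by simp
    rw [this] at hz
    rw [hz]
    field_simp
  have hzint : z * (p:ℤ) = (N':ℤ) := by exact_mod_cast hzq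
  have : (p:ℤ) ∣ (N':ℤ) := ⟨z, by linarith⟩
  exact_mod_cast this


private lemma Zf_prod (N' : ℕ) {ι : Type*} (T : Finset ι) (f : ι → ℤ) :
    Zf N' (∑ s ∈ T, f s) = ∏ s ∈ T, Zf N' (f s) := by
  classical
  induction T using Finset.induction_on with
  | empty => simp [Zf_zero]
  | @insert a T ha ih =>
      rw [Finset.sum_insert ha, Finset.prod_insert ha, Zf_add, ih]

private lemma coeff_prod_integral {Γ : Type*} [AddCommGroup Γ] [DecidableEq Γ]
    {ι : Type*} [DecidableEq ι] (D : Finset ι) (g : ι → Γ) (ρ : ι → ℂ)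
    (hρ : ∀ s ∈ D, IsIntegral ℤ (ρ s)) (γ : Γ) :
    IsIntegral ℤ ((∏ s ∈ D, (1 - AddMonoidAlgebra.single (g s) (ρ s))).coeff γ) := by
  classical
  rw [coeff_prod_one_sub_single]
  refine (integralClosure ℤ ℂ).sum_mem (fun T hT => ?_)
  split
  · refine Subalgebra.mul_mem _ (Subalgebra.pow_mem _ (Subalgebra.neg_mem _ (Subalgebra.one_mem _)) _) ?_
    exact Subalgebra.prod_mem _ (fun s hs => hρ s (Finset.mem_powerset.mp hT hs))
  · exact Subalgebra.zero_mem _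

private lemma coeffs_mul_integral {Γ : Type*} [AddCommGroup Γ] [DecidableEq Γ]
    (f g : AddMonoidAlgebra ℂ Γ) (hf : ∀ γ, IsIntegral ℤ (f.coeff γ)) (hg : ∀ γ, IsIntegral ℤ (g.coeff γ))
    (γ : Γ) : IsIntegral ℤ ((f * g).coeff γ) := by
  classical
  rw [AddMonoidAlgebra.coeff_mul]
  refine (integralClosure ℤ ℂ).sum_mem (fun a ha => ?_)
  refine (integralClosure ℤ ℂ).sum_mem (fun c hc => ?_)
  show (if a + c = γ then f.coeff a * g.coeff c else 0) ∈ integralClosure ℤ ℂ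
  split
  · exact Subalgebra.mul_mem _ (hf a) (hg c)
  · exact Subalgebra.zero_mem _

/-- **Theorem 2.3.**
Let `p` be a prime and `n, h ∈ ℕ`.  Consider a loopless multigraph with `l` vertices and
edge set `{1,…,k}`, encoded by incidence numbers `δ s t ∈ {0,1}` with `∑_t δ s t = 2` for
every edge `s`, and with every vertex degree `∑_s δ s t ≤ 2p^n − 1`.  If
`{a s (ns s)}_{s=1}^k` forms an `(l(p^n−1)+p^h)`-cover of `ℤ`, then for any
`m₁,…,m_k ∈ ℤ` there is a nonempty edge set `I` with `∑_{s∈I} m_s/ns_s ∈ p^h ℤ` which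
spans a `p^n`-regular subgraph (every vertex meets `I` in `0` or `p^n` edges). -/
theorem stmt8 (p : ℕ) (hp : p.Prime) (nn h : ℕ) (l k : ℕ)
    (δ : Fin k → Fin l → ℕ) (hδ01 : ∀ s t, δ s t ≤ 1)
    (hedge : ∀ s, ∑ t, δ s t = 2)
    (hdeg : ∀ t, ∑ s, δ s t ≤ 2 * p ^ nn - 1)
    (a : Fin k → ℤ) (ns : Fin k → ℕ) (hn : ∀ s, 0 < ns s)
    (hcover : ∀ x : ℤ,
      l * (p ^ nn - 1) + p ^ h ≤
        (Finset.univ.filter fun s : Fin k => (ns s : ℤ) ∣ x - a s).card)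
    (m : Fin k → ℤ) :
    ∃ I : Finset (Fin k), I.Nonempty ∧
      (∃ z : ℤ, ∑ s ∈ I, (m s : ℚ) / (ns s : ℚ) = (p : ℚ) ^ h * z) ∧
      ∀ t, (∑ s ∈ I, δ s t = 0 ∨ ∑ s ∈ I, δ s t = p ^ nn) := by
  classical
  haveI : Fact p.Prime := ⟨hp⟩
  set N : ℕ := Finset.univ.lcm ns with hNdef
  have hNdvd : ∀ s, ns s ∣ N := fun s => Finset.dvd_lcm (Finset.mem_univ s)
  have hNpos : 0 < N := by
    rcases Nat.eq_zero_or_pos N with h0 | hpos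
    · exfalso
      rw [hNdef] at h0
      rw [Finset.lcm_eq_zero_iff] at h0
      obtain ⟨s, _, hs0⟩ := h0
      exact (hn s).ne' hs0
    · exact hpos
  set e : ℕ := N.factorization p with he
  set N' : ℕ := N / p ^ e with hN'def
  set es : Fin k → ℕ := fun s => (ns s).factorization p with hes
  set cc : Fin k → ℕ := fun s => e - es s with hcc
  set nsc : Fin k → ℕ := fun s => ns s / p ^ (es s) with hnsc
  set E : ℕ := e + h with hE
  set bb : Fin k → ℤ := fun s => m s * ((N / ns s : ℕ) : ℤ) with hbb
  set g : Fin k → ((Fin l → ZMod (p^nn)) × ZMod (p^E)) :=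
    fun s => (fun t => ((δ s t : ℕ) : ZMod (p^nn)), ((bb s : ℤ) : ZMod (p^E))) with hg
  have hN'pos : 0 < N' := Nat.ordCompl_pos p hNpos.ne'
  have hN'ne : N' ≠ 0 := hN'pos.ne'
  have hpN' : ¬ p ∣ N' := Nat.not_dvd_ordCompl hp hNpos.ne'
  have hesle : ∀ s, es s ≤ e :=
    fun s => (Nat.factorization_le_iff_dvd (hn s).ne' hNpos.ne').mpr (hNdvd s) p
  have hccdvd : ∀ s, (p:ℕ)^(cc s) ∣ (N / ns s) := by
    intro s
    have hfd : (N / ns s).factorization p = e - es s := by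
      rw [Nat.factorization_div (hNdvd s)]
      rfl
    have := Nat.ordProj_dvd (N / ns s) p
    rwa [hfd] at this
  have hnscdvdN' : ∀ s, nsc s ∣ N' := fun s => Nat.ordCompl_dvd_ordCompl_of_dvd (hNdvd s) p
  have hNsplit : ∀ s, (N / ns s : ℕ) = p^(cc s) * (N' / nsc s) := by
    intro s
    have h1 : (N / ns s) * ns s = N := Nat.div_mul_cancel (hNdvd s)
    have h2 : (p^(cc s) * (N' / nsc s)) * ns s = N := by
      have hns : ns s = p^(es s) * nsc s := (Nat.ordProj_mul_ordCompl_eq_self (ns s) p).symm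
      have hN2 : N = p^e * N' := (Nat.ordProj_mul_ordCompl_eq_self N p).symm
      have h3 : (N' / nsc s) * nsc s = N' := Nat.div_mul_cancel (hnscdvdN' s)
      calc (p^(cc s) * (N' / nsc s)) * ns s
          = (p^(cc s) * p^(es s)) * ((N' / nsc s) * nsc s) := by rw [hns]; ring
        _ = p^e * N' := by rw [h3, ← pow_add, Nat.sub_add_cancel (hesle s)]
        _ = N := hN2.symm
    exact Nat.eq_of_mul_eq_mul_right (hn s) (h1.trans h2.symm)
  -- Step 1 : weighted covering inequality
  have hkey : ∀ x : ℕ, p^e * (l * (p^nn - 1) + p^h) ≤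
      ∑ s ∈ Finset.univ.filter (fun s => ((nsc s : ℕ):ℤ) ∣ (x:ℤ) - a s), p^(cc s) := by
    intro x
    calc p^e * (l * (p^nn - 1) + p^h)
        = ∑ _j ∈ Finset.range (p^e), (l * (p^nn - 1) + p^h) := by
          rw [Finset.sum_const, Finset.card_range, smul_eq_mul]
      _ ≤ ∑ j ∈ Finset.range (p^e),
            (Finset.univ.filter fun s : Fin k =>
              (ns s : ℤ) ∣ ((x:ℤ) + (j:ℤ) * ((N' : ℕ) : ℤ)) - a s).card :=
          Finset.sum_le_sum (fun j _ => hcover _)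
      _ = ∑ j ∈ Finset.range (p^e), ∑ s : Fin k,
            (if (ns s : ℤ) ∣ ((x:ℤ) - a s) + (j:ℤ) * ((N' : ℕ) : ℤ) then 1 else 0) := by
          refine Finset.sum_congr rfl fun j _ => ?_
          rw [Finset.card_filter]
          refine Finset.sum_congr rfl fun s _ => ?_
          have harg : ((x:ℤ) + (j:ℤ) * ((N' : ℕ) : ℤ)) - a s
              = ((x:ℤ) - a s) + (j:ℤ) * ((N' : ℕ) : ℤ) := by ring
          rw [harg]
      _ = ∑ s : Fin k, ∑ j ∈ Finset.range (p^e),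
            (if (ns s : ℤ) ∣ ((x:ℤ) - a s) + (j:ℤ) * ((N' : ℕ) : ℤ) then 1 else 0) :=
          Finset.sum_comm
      _ = ∑ s : Fin k, (if ((nsc s : ℕ):ℤ) ∣ (x:ℤ) - a s then p^(cc s) else 0) := by
          refine Finset.sum_congr rfl fun s _ => ?_
          rw [← Finset.card_filter]
          exact count_js p hp (ns s) N (hn s) hNpos (hNdvd s) ((x:ℤ) - a s)
      _ = ∑ s ∈ Finset.univ.filter (fun s => ((nsc s : ℕ):ℤ) ∣ (x:ℤ) - a s), p^(cc s) :=
          (Finset.sum_filter _ _).symm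
  -- Step 2: hypotheses for the group-ring vanishing lemma
  have hg1 : ∀ s : Fin k, (g s).1 = ∑ i ∈ Finset.univ.filter (fun i => δ s i = 1),
      Pi.single i 1 := by
    intro s
    funext t
    rw [Finset.sum_apply]
    have hpt : ∀ i ∈ Finset.univ.filter (fun i => δ s i = 1),
        (Pi.single i (1 : ZMod (p^nn)) : Fin l → ZMod (p^nn)) t
          = if t = i then (1 : ZMod (p^nn)) else 0 := fun i _ => Pi.single_apply i 1 t
    rw [Finset.sum_congr rfl hpt, Finset.sum_ite_eq]
    rcases Nat.le_one_iff_eq_zero_or_eq_one.mp (hδ01 s t) with h0 | h1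
    · simp [hg, h0]
    · simp [hg, h1]
  have hg2 : ∀ s : Fin k, ∃ γ : ZMod (p^E), (g s).2 = ((p^(cc s) : ℕ) : ZMod (p^E)) * γ := by
    intro s
    obtain ⟨tq, htq⟩ := hccdvd s
    refine ⟨((m s * tq : ℤ) : ZMod (p^E)), ?_⟩
    show ((bb s : ℤ) : ZMod (p^E)) = _
    rw [hbb]
    show (((m s * ((N / ns s : ℕ) : ℤ)) : ℤ) : ZMod (p^E)) = _
    rw [htq]
    push_cast
    ring
  -- Step 3: the combinatorial count hypothesis for each x
  have hcount : ∀ x : ℕ, ∀ φ : Fin k → Option (Fin l),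
      (∀ s ∈ (Finset.univ.filter (fun s => ((nsc s : ℕ):ℤ) ∣ (x:ℤ) - a s)), ∀ i, φ s = some i →
          i ∈ Finset.univ.filter (fun i => δ s i = 1)) →
      (∀ i, (((Finset.univ.filter (fun s => ((nsc s : ℕ):ℤ) ∣ (x:ℤ) - a s)).filter
          (fun s => φ s = some i)).card ≤ p^nn - 1)) →
      p^E ≤ ∑ s ∈ (Finset.univ.filter (fun s => ((nsc s : ℕ):ℤ) ∣ (x:ℤ) - a s)).filter
          (fun s => φ s = none), p^(cc s) := by
    intro x φ hφV hφcard
    set Cx := Finset.univ.filter (fun s => ((nsc s : ℕ):ℤ) ∣ (x:ℤ) - a s) with hCx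
    have hDcard : (Cx.filter (fun s => ¬ φ s = none)).card
        = ∑ i : Fin l, (Cx.filter (fun s => φ s = some i)).card := by
      have h1 : ∀ i : Fin l, (Cx.filter (fun s => φ s = some i)).card
          = ∑ s ∈ Cx, (if φ s = some i then 1 else 0) := fun i => Finset.card_filter _ _
      rw [Finset.card_filter]
      rw [Finset.sum_congr rfl (fun i (_ : i ∈ (Finset.univ : Finset (Fin l))) => h1 i)]
      rw [Finset.sum_comm]
      refine Finset.sum_congr rfl fun s _ => ?_
      cases hφs : φ s with
      | none => simp [hφs]
      | some i0 => simp [hφs]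
    have hDle : (Cx.filter (fun s => ¬ φ s = none)).card ≤ l * (p^nn - 1) := by
      rw [hDcard]
      calc ∑ i : Fin l, (Cx.filter (fun s => φ s = some i)).card
          ≤ ∑ _i : Fin l, (p^nn - 1) := Finset.sum_le_sum (fun i _ => hφcard i)
        _ = l * (p^nn - 1) := by
            rw [Finset.sum_const, Finset.card_univ, Fintype.card_fin, smul_eq_mul]
    have hsplit2 : ∑ s ∈ Cx.filter (fun s => φ s = none), p^(cc s)
        + ∑ s ∈ Cx.filter (fun s => ¬ φ s = none), p^(cc s) = ∑ s ∈ Cx, p^(cc s) :=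
      Finset.sum_filter_add_sum_filter_not Cx _ _
    have hsome_le : ∑ s ∈ Cx.filter (fun s => ¬ φ s = none), p^(cc s)
        ≤ (Cx.filter (fun s => ¬ φ s = none)).card * (p^e) := by
      calc ∑ s ∈ Cx.filter (fun s => ¬ φ s = none), p^(cc s)
          ≤ ∑ _s ∈ Cx.filter (fun s => ¬ φ s = none), p^e :=
            Finset.sum_le_sum (fun s _ => Nat.pow_le_pow_right hp.pos (Nat.sub_le e (es s)))
        _ = (Cx.filter (fun s => ¬ φ s = none)).card * (p^e) := by
            rw [Finset.sum_const, smul_eq_mul]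
    have hsome_le2 : ∑ s ∈ Cx.filter (fun s => ¬ φ s = none), p^(cc s)
        ≤ (l * (p^nn - 1)) * p^e :=
      le_trans hsome_le (Nat.mul_le_mul_right _ hDle)
    have hA := hkey x
    have hmul : p^e * (l * (p^nn - 1) + p^h) = (l * (p^nn - 1)) * p^e + p^e * p^h := by ring
    have hEe : p^E = p^e * p^h := by rw [hE, pow_add]
    rw [hEe]
    rw [hmul] at hA
    linarith [hA, hsplit2, hsome_le2]
  -- Step 4: per-x vanishing of the covered product over ZMod p
  have hzero : ∀ x : ℕ, ∏ s ∈ (Finset.univ.filter (fun s => ((nsc s:ℕ):ℤ) ∣ (x:ℤ) - a s)),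
      (1 - AddMonoidAlgebra.single (g s) (1 : ZMod p)) = 0 := by
    intro x
    exact prod_one_sub_single_eq_zero p l nn E _ g
      (fun s => Finset.univ.filter (fun i => δ s i = 1)) cc
      (fun s _ => hg1 s) (fun s _ => hg2 s) (hcount x)
  -- Step 5: the complex-side objects
  set ρ : Fin k → ℕ → ℂ := fun s x => Zf N' (bb s * ((x:ℤ) - a s)) with hρdef
  set Φ : ℕ → AddMonoidAlgebra ℂ ((Fin l → ZMod (p^nn)) × ZMod (p^E)) :=
    fun x => ∏ s : Fin k, (1 - AddMonoidAlgebra.single (g s) (ρ s x)) with hΦ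
  have hsum1 : ∑ x ∈ Finset.range N', (Φ x).coeff 0 =
      ∑ T ∈ (Finset.univ : Finset (Fin k)).powerset,
        (if (∑ s ∈ T, g s) = 0 ∧ ((N':ℕ):ℤ) ∣ (∑ s ∈ T, bb s)
         then ((-1:ℂ)^T.card * Zf N' (-(∑ s ∈ T, bb s * a s))) * (N':ℂ) else 0) := by
    have hx : ∀ x ∈ Finset.range N', (Φ x).coeff 0 =
        ∑ T ∈ (Finset.univ : Finset (Fin k)).powerset,
          (if (∑ s ∈ T, g s) = 0 then (-1:ℂ)^T.card * ∏ s ∈ T, ρ s x else 0) :=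
      fun x _ => coeff_prod_one_sub_single _ g (fun s => ρ s x) 0
    rw [Finset.sum_congr rfl hx, Finset.sum_comm]
    refine Finset.sum_congr rfl fun T _ => ?_
    by_cases hT0 : (∑ s ∈ T, g s) = 0
    · have hprod : ∀ x : ℕ, ∏ s ∈ T, ρ s x
          = (Zf N' (∑ s ∈ T, bb s))^x * Zf N' (-(∑ s ∈ T, bb s * a s)) := by
        intro x
        rw [← Zf_prod]
        have hsum : ∑ s ∈ T, bb s * ((x:ℤ) - a s)
            = (∑ s ∈ T, bb s) * (x:ℤ) + (-(∑ s ∈ T, bb s * a s)) := by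
          rw [Finset.sum_mul, ← Finset.sum_neg_distrib, ← Finset.sum_add_distrib]
          exact Finset.sum_congr rfl fun s _ => by ring
        rw [hsum, Zf_add, Zf_natpow]
      have hstep : ∑ x ∈ Finset.range N',
            (if (∑ s ∈ T, g s) = 0 then (-1:ℂ)^T.card * ∏ s ∈ T, ρ s x else 0)
          = ((-1:ℂ)^T.card * Zf N' (-(∑ s ∈ T, bb s * a s))) *
            ∑ x ∈ Finset.range N', (Zf N' (∑ s ∈ T, bb s))^x := by
        rw [Finset.mul_sum]
        refine Finset.sum_congr rfl fun x _ => ?_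
        rw [if_pos hT0, hprod x]
        ring
      rw [hstep, Zf_sum_geom N' hN'ne]
      by_cases hdvd : ((N':ℕ):ℤ) ∣ (∑ s ∈ T, bb s)
      · rw [if_pos hdvd, if_pos (show (∑ s ∈ T, g s) = 0 ∧ ((N':ℕ):ℤ) ∣ (∑ s ∈ T, bb s) from ⟨hT0, hdvd⟩)]
      · rw [if_neg hdvd, if_neg (fun hcc2 => hdvd (And.right hcc2)), mul_zero]
    · rw [if_neg (fun hcc2 => hT0 hcc2.1)]
      refine Finset.sum_eq_zero fun x _ => ?_
      rw [if_neg hT0]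
  -- Step 6: each (Φ x).coeff 0 is p times an algebraic integer
  have hPhi : ∀ x : ℕ, ∃ γx : ℂ, IsIntegral ℤ γx ∧ (Φ x).coeff 0 = (p:ℂ) * γx := by
    intro x
    have hρ1 : ∀ s ∈ Finset.univ.filter (fun s => ((nsc s:ℕ):ℤ) ∣ (x:ℤ) - a s), ρ s x = 1 := by
      intro s hs
      obtain ⟨d, hd⟩ := (Finset.mem_filter.mp hs).2
      apply (Zf_one_iff N' hN'ne _).mpr
      have h1 : ((N / ns s : ℕ) : ℤ) = ((p^(cc s) : ℕ) : ℤ) * ((N' / nsc s : ℕ) : ℤ) := by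
        rw [hNsplit s]; push_cast; ring
      have h2 : ((N' / nsc s : ℕ) : ℤ) * ((nsc s : ℕ) : ℤ) = ((N' : ℕ) : ℤ) := by
        rw [← Nat.cast_mul, Nat.div_mul_cancel (hnscdvdN' s)]
      refine ⟨m s * ((p^(cc s) : ℕ) : ℤ) * d, ?_⟩
      calc (bb s) * ((x:ℤ) - a s)
          = m s * ((N / ns s : ℕ) : ℤ) * ((x:ℤ) - a s) := rfl
        _ = m s * (((p^(cc s):ℕ):ℤ) * ((N' / nsc s : ℕ):ℤ)) * (((nsc s:ℕ):ℤ) * d) := by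
            rw [← h1, ← hd]
        _ = (((N' / nsc s : ℕ):ℤ) * ((nsc s:ℕ):ℤ)) * (m s * ((p^(cc s):ℕ):ℤ) * d) := by ring
        _ = ((N':ℕ) : ℤ) * (m s * ((p^(cc s):ℕ):ℤ) * d) := by rw [h2]
    have hfact : Φ x = (∏ s ∈ Finset.univ.filter (fun s => ((nsc s:ℕ):ℤ) ∣ (x:ℤ) - a s),
          (1 - AddMonoidAlgebra.single (g s) (1:ℂ)))
        * (∏ s ∈ Finset.univ.filter (fun s => ¬ ((nsc s:ℕ):ℤ) ∣ (x:ℤ) - a s),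
            (1 - AddMonoidAlgebra.single (g s) (ρ s x))) := by
      rw [hΦ]
      show ∏ s : Fin k, (1 - AddMonoidAlgebra.single (g s) (ρ s x)) = _
      rw [← Finset.prod_filter_mul_prod_filter_not Finset.univ
        (fun s => ((nsc s:ℕ):ℤ) ∣ (x:ℤ) - a s)
        (fun s => 1 - AddMonoidAlgebra.single (g s) (ρ s x))]
      congr 1
      exact Finset.prod_congr rfl (fun s hs => by rw [hρ1 s hs])
    set Cxx := Finset.univ.filter (fun s : Fin k => ((nsc s:ℕ):ℤ) ∣ (x:ℤ) - a s) with hCxx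
    set cInt : ((Fin l → ZMod (p^nn)) × ZMod (p^E)) → ℤ := fun γ =>
      ∑ T ∈ Cxx.powerset, (if (∑ s ∈ T, g s) = γ then (-1:ℤ)^T.card else 0) with hcInt
    have hcoeffC : ∀ γ, (∏ s ∈ Cxx, (1 - AddMonoidAlgebra.single (g s) (1:ℂ))).coeff γ
        = ((cInt γ : ℤ) : ℂ) := by
      intro γ
      rw [coeff_prod_one_sub_single, hcInt]
      push_cast
      refine Finset.sum_congr rfl fun T _ => ?_
      split_ifs <;> simp
    have hdvdp : ∀ γ, (p:ℤ) ∣ cInt γ := by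
      intro γ
      have h2 : (∏ s ∈ Cxx, (1 - AddMonoidAlgebra.single (g s) (1:ZMod p))).coeff γ = 0 := by
        rw [hzero x]; rfl
      rw [coeff_prod_one_sub_single] at h2
      have hcast : ((cInt γ : ℤ) : ZMod p) = 0 := by
        calc ((cInt γ : ℤ) : ZMod p)
            = ∑ T ∈ Cxx.powerset, (if (∑ s ∈ T, g s) = γ
                then ((-1:ZMod p))^T.card * ∏ _s ∈ T, (1:ZMod p) else 0) := by
              rw [hcInt]
              push_cast
              refine Finset.sum_congr rfl fun T _ => ?_
              split_ifs <;> simp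
          _ = 0 := h2
      exact (ZMod.intCast_zmod_eq_zero_iff_dvd _ p).mp hcast
    have hpnec : (p:ℂ) ≠ 0 := Nat.cast_ne_zero.mpr hp.pos.ne'
    refine ⟨(((p:ℂ)⁻¹ • (∏ s ∈ Cxx, (1 - AddMonoidAlgebra.single (g s) (1:ℂ))))
        * (∏ s ∈ Finset.univ.filter (fun s => ¬ ((nsc s:ℕ):ℤ) ∣ (x:ℤ) - a s),
            (1 - AddMonoidAlgebra.single (g s) (ρ s x)))).coeff 0, ?_, ?_⟩
    · apply coeffs_mul_integral
      · intro γ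
        rw [AddMonoidAlgebra.coeff_smul, Finsupp.smul_apply, hcoeffC γ, smul_eq_mul]
        obtain ⟨t, ht⟩ := hdvdp γ
        rw [ht]
        push_cast
        rw [← mul_assoc, inv_mul_cancel₀ hpnec, one_mul]
        exact isIntegral_algebraMap (x := t)
      · intro γ
        exact coeff_prod_integral _ g (fun s => ρ s x)
          (fun s _ => Zf_integral N' hN'ne _) γ
    · have hsm : (∏ s ∈ Cxx, (1 - AddMonoidAlgebra.single (g s) (1:ℂ)))
          = (p:ℂ) • ((p:ℂ)⁻¹ • (∏ s ∈ Cxx, (1 - AddMonoidAlgebra.single (g s) (1:ℂ)))) := by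
        rw [smul_smul, mul_inv_cancel₀ hpnec, one_smul]
      conv_lhs => rw [hfact, hsm]
      rw [smul_mul_assoc, AddMonoidAlgebra.coeff_smul, Finsupp.smul_apply, smul_eq_mul]
  -- Step 7: conclusion
  by_cases hEx : ∃ T : Finset (Fin k), T.Nonempty ∧ (∑ s ∈ T, g s) = 0 ∧
      ((N':ℕ):ℤ) ∣ (∑ s ∈ T, bb s)
  · obtain ⟨I, hne, hzs, hdvdN'⟩ := hEx
    haveI : NeZero (p^E) := ⟨pow_ne_zero _ hp.pos.ne'⟩
    haveI : NeZero (p^nn) := ⟨pow_ne_zero _ hp.pos.ne'⟩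
    refine ⟨I, hne, ?_, ?_⟩
    · have hsnd : ((∑ s ∈ I, bb s : ℤ) : ZMod (p^E)) = 0 := by
        have h1 : (∑ s ∈ I, g s).2 = 0 := by rw [hzs]; rfl
        rw [Prod.snd_sum] at h1
        rw [Int.cast_sum]
        exact h1
      have hp2 : ((p^E : ℕ):ℤ) ∣ (∑ s ∈ I, bb s) :=
        (ZMod.intCast_zmod_eq_zero_iff_dvd _ _).mp hsnd
      have hcop : IsCoprime ((p^E : ℕ) : ℤ) ((N' : ℕ) : ℤ) := by
        rw [Int.isCoprime_iff_gcd_eq_one]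
        exact_mod_cast Nat.Coprime.pow_left E (hp.coprime_iff_not_dvd.mpr hpN')
      have hNM : ((p^E * N' : ℕ) : ℤ) ∣ (∑ s ∈ I, bb s) := by
        rw [Nat.cast_mul]
        exact hcop.mul_dvd hp2 hdvdN'
      have hNMeq : (p^E * N' : ℕ) = p^h * N := by
        rw [hE, pow_add, mul_comm (p^e) (p^h), mul_assoc]
        congr 1
        exact Nat.ordProj_mul_ordCompl_eq_self N p
      obtain ⟨z, hz⟩ := hNM
      refine ⟨z, ?_⟩
      have hper : ∀ s, (m s : ℚ) / (ns s : ℚ) = ((bb s : ℤ) : ℚ) / (N:ℚ) := by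
        intro s
        have hnsne : ((ns s : ℕ) : ℚ) ≠ 0 := Nat.cast_ne_zero.mpr (hn s).ne'
        have hNne : ((N : ℕ) : ℚ) ≠ 0 := Nat.cast_ne_zero.mpr hNpos.ne'
        have hcast : ((N / ns s : ℕ) : ℚ) = (N:ℚ)/((ns s : ℕ):ℚ) :=
          Nat.cast_div (hNdvd s) hnsne
        have hbbq : ((bb s : ℤ) : ℚ) = (m s : ℚ) * ((N / ns s : ℕ) : ℚ) := by
          rw [hbb]
          rw [Int.cast_mul, Int.cast_natCast]
        rw [hbbq, hcast]
        field_simp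
      rw [Finset.sum_congr rfl (fun s _ => hper s), ← Finset.sum_div]
      have hsum2 : ∑ i ∈ I, ((bb i : ℤ) : ℚ) = ((∑ i ∈ I, bb i : ℤ) : ℚ) := by
        push_cast
        ring
      have hzq : ((∑ s ∈ I, bb s : ℤ) : ℚ) = ((p^E * N' : ℕ) : ℚ) * (z:ℚ) := by
        exact_mod_cast congrArg (fun w : ℤ => (w : ℚ)) hz
      rw [hsum2, hzq, hNMeq]
      have hNne : ((N : ℕ) : ℚ) ≠ 0 := Nat.cast_ne_zero.mpr hNpos.ne'
      push_cast
      field_simp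
    · intro t
      have h1 : (∑ s ∈ I, g s).1 = 0 := by rw [hzs]; rfl
      rw [Prod.fst_sum] at h1
      have h2 : ((∑ s ∈ I, δ s t : ℕ) : ZMod (p^nn)) = 0 := by
        have h3 := congrFun h1 t
        rw [Finset.sum_apply] at h3
        rw [Nat.cast_sum]
        exact h3
      have hdvdq : p^nn ∣ ∑ s ∈ I, δ s t := (ZMod.natCast_eq_zero_iff _ _).mp h2
      have hle : ∑ s ∈ I, δ s t ≤ 2 * p^nn - 1 :=
        le_trans (Finset.sum_le_sum_of_subset (Finset.subset_univ I)) (hdeg t)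
      obtain ⟨c, hc⟩ := hdvdq
      have hq1 : 1 ≤ p^nn := Nat.one_le_pow _ _ hp.pos
      rcases Nat.lt_or_ge c 1 with hc0 | hc1
      · left
        have hc00 : c = 0 := by omega
        rw [hc, hc00, mul_zero]
      · rcases Nat.lt_or_ge c 2 with hc2 | hc3
        · right
          have hc11 : c = 1 := by omega
          rw [hc, hc11, mul_one]
        · exfalso
          have h4 : p^nn * 2 ≤ p^nn * c := Nat.mul_le_mul_left _ hc3
          rw [← hc] at h4
          omega
  · exfalso
    have honly : ∑ T ∈ (Finset.univ : Finset (Fin k)).powerset,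
        (if (∑ s ∈ T, g s) = 0 ∧ ((N':ℕ):ℤ) ∣ (∑ s ∈ T, bb s)
         then ((-1:ℂ)^T.card * Zf N' (-(∑ s ∈ T, bb s * a s))) * (N':ℂ) else 0) = (N':ℂ) := by
      rw [Finset.sum_eq_single (∅ : Finset (Fin k))]
      · rw [if_pos ⟨by simp, by simp⟩]
        simp [Zf_zero]
      · intro T _ hTne
        rw [if_neg]
        rintro ⟨hc1, hc2⟩
        exact hEx ⟨T, Finset.nonempty_of_ne_empty hTne, hc1, hc2⟩
      · intro habs
        exact absurd (Finset.mem_powerset.mpr (Finset.empty_subset _)) habs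
    choose γf hγint hγeq using hPhi
    have hfin : (N':ℂ) = (p:ℂ) * ∑ x ∈ Finset.range N', γf x := by
      rw [← honly, ← hsum1, Finset.sum_congr rfl (fun x _ => hγeq x), ← Finset.mul_sum]
    have hint : IsIntegral ℤ (∑ x ∈ Finset.range N', γf x) :=
      (integralClosure ℤ ℂ).sum_mem (fun x _ => hγint x)
    exact hpN' (dvd_of_isIntegral_div p N' hp.pos _ hint hfin)
end

section
/- Let A = {a_s(n_s)}_{s=1}^k be an m-cover of ℤ. Let m_1,...,m_k ∈ ℤ, and let μ_1,...,μ_k be rational numbers such that Σ_{s∈I} μ_s ∈ ℤ for every I ⊆ {1,...,k} with Σ_{s∈I} m_s/n_s ∈ ℤ. Let p be a prime, and assume there is no nonempty I ⊆ {1,...,k} such that Σ_{s∈I} m_s/n_s ∈ ℤ and Σ_{s∈I} μ_s ∈ pℤ. Then |{(Σ_{s∈I} μ_s) mod p : I nonempty, I ⊆ {1,...,k}, Σ_{s∈I} m_s/n_s ∈ ℤ}| ≥ m. -/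
noncomputable def EE (N : ℕ) (z : ℤ) : ℂ := Complex.exp (2 * Real.pi * Complex.I * z / N)

lemma EE_add (N : ℕ) (z w : ℤ) : EE N (z + w) = EE N z * EE N w := by
  rw [EE, EE, EE, ← Complex.exp_add]
  congr 1
  push_cast
  ring

lemma EE_zero (N : ℕ) : EE N 0 = 1 := by simp [EE]

lemma EE_eq_one_iff {N : ℕ} (hN : N ≠ 0) (z : ℤ) : EE N z = 1 ↔ (N : ℤ) ∣ z := by
  have hNC : (N : ℂ) ≠ 0 := Nat.cast_ne_zero.mpr hN
  have h2 : (2 * Real.pi * Complex.I : ℂ) ≠ 0 := Complex.two_pi_I_ne_zero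
  rw [EE, Complex.exp_eq_one_iff]
  constructor
  · rintro ⟨n, hn⟩
    refine ⟨n, ?_⟩
    have h3 : (2 * Real.pi * Complex.I) * (z : ℂ)
        = (2 * Real.pi * Complex.I) * ((N : ℂ) * (n : ℂ)) := by
      field_simp at hn
      linear_combination (2 * Real.pi * Complex.I) * hn
    have h4 := mul_left_cancel₀ h2 h3
    exact_mod_cast h4
  · rintro ⟨n, rfl⟩
    refine ⟨n, ?_⟩
    push_cast
    field_simp

lemma EE_nat_pow (N : ℕ) (z : ℤ) (x : ℕ) : EE N z ^ x = EE N (z * x) := by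
  rw [EE, EE, ← Complex.exp_nat_mul]
  congr 1
  push_cast
  ring

lemma EE_pow_card {N : ℕ} (hN : N ≠ 0) (z : ℤ) : EE N z ^ N = 1 := by
  rw [EE_nat_pow]
  exact (EE_eq_one_iff hN _).mpr ⟨z, by ring⟩

lemma EE_sum {N : ℕ} {α : Type*} (I : Finset α) (f : α → ℤ) :
    EE N (∑ s ∈ I, f s) = ∏ s ∈ I, EE N (f s) := by
  have : (2 * Real.pi * Complex.I * (((∑ s ∈ I, f s : ℤ)) : ℂ) / N)
      = ∑ s ∈ I, (2 * Real.pi * Complex.I * (f s : ℂ) / N) := by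
    push_cast
    rw [Finset.mul_sum, Finset.sum_div]
  rw [EE, this, Complex.exp_sum]
  rfl

open Polynomial in
lemma aux_int_of_pow_eq_one {x : ℂ} {N : ℕ} (hN : N ≠ 0) (h : x ^ N = 1) : IsIntegral ℤ x := by
  refine ⟨X ^ N - C 1, Polynomial.monic_X_pow_sub_C 1 hN, ?_⟩
  simp [h]

lemma EE_isIntegral {N : ℕ} (hN : N ≠ 0) (z : ℤ) : IsIntegral ℤ (EE N z) :=
  aux_int_of_pow_eq_one hN (EE_pow_card hN z)

lemma claimL {K : Type*} [CommRing K] {k : ℕ} (u c : Fin k → K) (T : Finset (Fin k))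
    (hT : ∀ s ∈ T, u s = 1) (j : ℕ) (hj : j < T.card) :
    ∑ I : Finset (Fin k), (∏ s ∈ I, -u s) * (∑ s ∈ I, c s) ^ j = 0 := by
  classical
  -- expand the power as a sum over functions
  have expand : ∀ I : Finset (Fin k), (∑ s ∈ I, c s) ^ j
      = ∑ f : Fin j → Fin k, if (∀ i, f i ∈ I) then ∏ i : Fin j, c (f i) else 0 := by
    intro I
    have h1 : (∑ s ∈ I, c s) ^ j = ∏ _i : Fin j, (∑ s ∈ I, c s) := by
      rw [Finset.prod_const, Finset.card_univ, Fintype.card_fin]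
    rw [h1, Finset.prod_univ_sum]
    rw [← Finset.sum_filter]
    apply Finset.sum_congr _ (fun _ _ => rfl)
    ext f
    simp [Fintype.mem_piFinset]
  calc ∑ I : Finset (Fin k), (∏ s ∈ I, -u s) * (∑ s ∈ I, c s) ^ j
      = ∑ I : Finset (Fin k), ∑ f : Fin j → Fin k,
          (if (∀ i, f i ∈ I) then (∏ s ∈ I, -u s) * ∏ i : Fin j, c (f i) else 0) := by
        apply Finset.sum_congr rfl; intro I _
        rw [expand, Finset.mul_sum]
        apply Finset.sum_congr rfl; intro f _
        split <;> simp
    _ = ∑ f : Fin j → Fin k, ∑ I : Finset (Fin k),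
          (if (∀ i, f i ∈ I) then (∏ s ∈ I, -u s) * ∏ i : Fin j, c (f i) else 0) :=
        Finset.sum_comm
    _ = 0 := by
        apply Finset.sum_eq_zero; intro f _
        -- find s₀ ∈ T not in the image of f
        obtain ⟨s₀, hs₀T, hs₀⟩ : ∃ s₀ ∈ T, s₀ ∉ Finset.image f Finset.univ := by
          by_contra hcon
          push_neg at hcon
          have : T ⊆ Finset.image f Finset.univ := hcon
          have h2 := Finset.card_le_card this
          have h3 : (Finset.image f Finset.univ).card ≤ j := by
            calc (Finset.image f Finset.univ).card ≤ (Finset.univ : Finset (Fin j)).card :=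
                  Finset.card_image_le
              _ = j := by simp
          omega
        -- pair up I and insert s₀ I
        have key : ∀ I ∈ (Finset.univ.erase s₀).powerset,
            (if (∀ i, f i ∈ I) then (∏ s ∈ I, -u s) * ∏ i : Fin j, c (f i) else 0)
            + (if (∀ i, f i ∈ insert s₀ I) then (∏ s ∈ insert s₀ I, -u s) * ∏ i : Fin j, c (f i) else 0)
            = 0 := by
          intro I hI
          have hs₀I : s₀ ∉ I := fun h =>
            Finset.notMem_erase s₀ _ (Finset.mem_powerset.mp hI h)
          have hcond : (∀ i, f i ∈ insert s₀ I) ↔ (∀ i, f i ∈ I) := by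
            constructor
            · intro h i
              rcases Finset.mem_insert.mp (h i) with h' | h'
              · exact absurd (h' ▸ Finset.mem_image_of_mem f (Finset.mem_univ i)) hs₀
              · exact h'
            · intro h i; exact Finset.mem_insert_of_mem (h i)
          have hprod : ∏ s ∈ insert s₀ I, -u s = -∏ s ∈ I, -u s := by
            rw [Finset.prod_insert hs₀I, hT s₀ hs₀T]; ring
          by_cases hc : ∀ i, f i ∈ I
          · rw [if_pos hc, if_pos (hcond.mpr hc), hprod]; ring
          · rw [if_neg hc, if_neg (fun h => hc (hcond.mp h))]; ring
        have huniv : (Finset.univ : Finset (Finset (Fin k)))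
            = (insert s₀ (Finset.univ.erase s₀)).powerset := by
          rw [Finset.insert_erase (Finset.mem_univ s₀), Finset.powerset_univ]
        rw [huniv, Finset.sum_powerset_insert (Finset.notMem_erase s₀ _),
          ← Finset.sum_add_distrib]
        exact Finset.sum_eq_zero key

/-- **Corollary 3.1.**
Let `{a s (n s)}_{s=1}^k` be an `m`-cover of `ℤ`, let `m₁,…,m_k ∈ ℤ`, and let
`μ₁,…,μ_k ∈ ℚ` be such that `∑_{s∈I} μ_s ∈ ℤ` whenever `∑_{s∈I} m_s/n_s ∈ ℤ`.
If `p` is a prime and there is no nonempty `I` with `∑_{s∈I} m_s/n_s ∈ ℤ` and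
`∑_{s∈I} μ_s ∈ pℤ`, then the residues `(∑_{s∈I} μ_s) mod p` over nonempty `I` with
`∑_{s∈I} m_s/n_s ∈ ℤ` take at least `m` values. -/
theorem stmt10 (mm : ℕ) (k : ℕ) (a : Fin k → ℤ) (n : Fin k → ℕ) (hn : ∀ s, 0 < n s)
    (hcover : ∀ x : ℤ,
      mm ≤ (Finset.univ.filter fun s : Fin k => (n s : ℤ) ∣ x - a s).card)
    (m : Fin k → ℤ) (μ : Fin k → ℚ)
    (hμint : ∀ I : Finset (Fin k),
      (∃ z : ℤ, ∑ s ∈ I, (m s : ℚ) / (n s : ℚ) = z) → ∃ z : ℤ, ∑ s ∈ I, μ s = z)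
    (p : ℕ) (hp : p.Prime)
    (hnone : ¬ ∃ I : Finset (Fin k), I.Nonempty ∧
      (∃ z : ℤ, ∑ s ∈ I, (m s : ℚ) / (n s : ℚ) = z) ∧
      ∃ z : ℤ, ∑ s ∈ I, μ s = (p : ℚ) * z) :
    mm ≤ {r : ZMod p | ∃ I : Finset (Fin k), I.Nonempty ∧
      (∃ z : ℤ, ∑ s ∈ I, (m s : ℚ) / (n s : ℚ) = z) ∧
      ((∑ s ∈ I, μ s).num : ZMod p) = r}.ncard := by
  classical
  haveI : NeZero p := ⟨hp.pos.ne'⟩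
  by_contra hcon
  push_neg at hcon
  -- notation
  set S : Set (ZMod p) := {r : ZMod p | ∃ I : Finset (Fin k), I.Nonempty ∧
      (∃ z : ℤ, ∑ s ∈ I, (m s : ℚ) / (n s : ℚ) = z) ∧
      ((∑ s ∈ I, μ s).num : ZMod p) = r} with hSdef
  set N : ℕ := ∏ s, n s with hNdef
  have hNpos : 0 < N := Finset.prod_pos (fun s _ => hn s)
  have hN0 : N ≠ 0 := hNpos.ne'
  have hdvdN : ∀ s, n s ∣ N := fun s => Finset.dvd_prod_of_mem n (Finset.mem_univ s)
  obtain ⟨v, hv⟩ : ∃ v : Fin k → ℤ, ∀ s, v s = ((N / n s : ℕ) : ℤ) * m s :=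
    ⟨_, fun s => rfl⟩
  have hNn : ∀ s, ((N / n s : ℕ) : ℤ) * (n s : ℤ) = (N : ℤ) := by
    intro s; exact_mod_cast congrArg (Nat.cast : ℕ → ℤ) (Nat.div_mul_cancel (hdvdN s))
  have hNq : (N : ℚ) ≠ 0 := Nat.cast_ne_zero.mpr hN0
  -- validity characterization
  have hvalid : ∀ I : Finset (Fin k),
      (∃ z : ℤ, ∑ s ∈ I, (m s : ℚ) / (n s : ℚ) = z) ↔ (N : ℤ) ∣ ∑ s ∈ I, v s := by
    intro I
    have hterm : ∀ s, (m s : ℚ) / (n s : ℚ) = ((v s : ℤ) : ℚ) / (N : ℚ) := by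
      intro s
      have hns : (n s : ℚ) ≠ 0 := Nat.cast_ne_zero.mpr (hn s).ne'
      rw [div_eq_div_iff hns hNq, hv s]
      have h2 : (((N / n s : ℕ) : ℤ) : ℚ) * (((n s : ℕ) : ℤ) : ℚ) = ((N : ℤ) : ℚ) := by
        exact_mod_cast hNn s
      push_cast at h2 ⊢
      linear_combination (-(m s : ℚ)) * h2
    have hsum : ∑ s ∈ I, (m s : ℚ) / (n s : ℚ) = ((∑ s ∈ I, v s : ℤ) : ℚ) / (N : ℚ) := by
      rw [Finset.sum_congr rfl fun s _ => hterm s, ← Finset.sum_div]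
      norm_cast
    constructor
    · rintro ⟨z, hz⟩
      rw [hsum, div_eq_iff hNq] at hz
      have hz' : ∑ s ∈ I, v s = z * N := by exact_mod_cast hz
      exact ⟨z, by rw [hz']; ring⟩
    · rintro ⟨c, hc⟩
      refine ⟨c, ?_⟩
      rw [hsum, hc]
      push_cast
      rw [mul_comm]
      exact mul_div_cancel_right₀ _ hNq
  -- main exponential-sum identity
  obtain ⟨ee, hee⟩ : ∃ ee : Finset (Fin k) → ℂ, ∀ I, ee I = ∑ s ∈ I, (μ s : ℂ) :=
    ⟨_, fun _ => rfl⟩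
  obtain ⟨eps, heps⟩ : ∃ eps : Finset (Fin k) → ℂ,
      ∀ I, eps I = ∏ s ∈ I, -EE N (-(v s * a s)) := ⟨_, fun _ => rfl⟩
  set V' : Finset (Finset (Fin k)) :=
    Finset.univ.filter (fun I => (N : ℤ) ∣ ∑ s ∈ I, v s) with hV'def
  have hNC : (N : ℂ) ≠ 0 := Nat.cast_ne_zero.mpr hN0
  have hkey : ∀ j, j < mm → ∑ I ∈ V', eps I * ee I ^ j = 0 := by
    intro j hj
    have hA : ∀ x : ℕ, ∑ I : Finset (Fin k),
        (∏ s ∈ I, -(EE N (v s * x) * EE N (-(v s * a s)))) * (∑ s ∈ I, (μ s : ℂ)) ^ j = 0 := by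
      intro x
      refine claimL _ _ (Finset.univ.filter fun s => (n s : ℤ) ∣ (x : ℤ) - a s) ?_ j
        (lt_of_lt_of_le hj (hcover x))
      intro s hs
      obtain ⟨y, hy⟩ := (Finset.mem_filter.mp hs).2
      rw [← EE_add]
      have harg : v s * x + -(v s * a s) = v s * ((x : ℤ) - a s) := by ring
      rw [harg]
      refine (EE_eq_one_iff hN0 _).mpr ⟨m s * y, ?_⟩
      rw [hv s, hy]
      linear_combination (m s * y) * (hNn s)
    have hB : ∀ (I : Finset (Fin k)) (x : ℕ),
        (∏ s ∈ I, -(EE N (v s * x) * EE N (-(v s * a s))))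
          = eps I * EE N (∑ s ∈ I, v s) ^ x := by
      intro I x
      calc ∏ s ∈ I, -(EE N (v s * x) * EE N (-(v s * a s)))
          = ∏ s ∈ I, (-EE N (-(v s * a s))) * EE N (v s * x) := by
            apply Finset.prod_congr rfl; intro s _; ring
        _ = eps I * ∏ s ∈ I, EE N (v s * x) := by rw [Finset.prod_mul_distrib, heps I]
        _ = eps I * EE N (∑ s ∈ I, v s * x) := by rw [EE_sum]
        _ = eps I * EE N ((∑ s ∈ I, v s) * x) := by rw [← Finset.sum_mul]
        _ = eps I * EE N (∑ s ∈ I, v s) ^ x := by rw [EE_nat_pow]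
    have hgeom : ∀ I : Finset (Fin k), ∑ x ∈ Finset.range N, EE N (∑ s ∈ I, v s) ^ x
        = if (N : ℤ) ∣ ∑ s ∈ I, v s then (N : ℂ) else 0 := by
      intro I
      by_cases hdv : (N : ℤ) ∣ ∑ s ∈ I, v s
      · rw [if_pos hdv, (EE_eq_one_iff hN0 _).mpr hdv]
        simp
      · rw [if_neg hdv]
        have hne : EE N (∑ s ∈ I, v s) ≠ 1 := fun h => hdv ((EE_eq_one_iff hN0 _).mp h)
        rw [geom_sum_eq hne, EE_pow_card hN0]
        simp
    have hC : (0 : ℂ) = ∑ I : Finset (Fin k),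
        eps I * (if (N : ℤ) ∣ ∑ s ∈ I, v s then (N : ℂ) else 0) * (∑ s ∈ I, (μ s : ℂ)) ^ j := by
      calc (0 : ℂ) = ∑ x ∈ Finset.range N, ∑ I : Finset (Fin k),
            (∏ s ∈ I, -(EE N (v s * x) * EE N (-(v s * a s)))) * (∑ s ∈ I, (μ s : ℂ)) ^ j :=
            (Finset.sum_eq_zero (fun x _ => hA x)).symm
        _ = ∑ I : Finset (Fin k), ∑ x ∈ Finset.range N,
            (∏ s ∈ I, -(EE N (v s * x) * EE N (-(v s * a s)))) * (∑ s ∈ I, (μ s : ℂ)) ^ j :=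
            Finset.sum_comm
        _ = _ := by
            apply Finset.sum_congr rfl
            intro I _
            calc ∑ x ∈ Finset.range N,
                  (∏ s ∈ I, -(EE N (v s * x) * EE N (-(v s * a s)))) * (∑ s ∈ I, (μ s : ℂ)) ^ j
                = ∑ x ∈ Finset.range N,
                  EE N (∑ s ∈ I, v s) ^ x * (eps I * (∑ s ∈ I, (μ s : ℂ)) ^ j) := by
                  refine Finset.sum_congr rfl fun x _ => ?_
                  rw [hB I x]; ring
              _ = (∑ x ∈ Finset.range N, EE N (∑ s ∈ I, v s) ^ x)
                    * (eps I * (∑ s ∈ I, (μ s : ℂ)) ^ j) := by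
                  rw [Finset.sum_mul]
              _ = eps I * (if (N : ℤ) ∣ ∑ s ∈ I, v s then (N : ℂ) else 0)
                    * (∑ s ∈ I, (μ s : ℂ)) ^ j := by
                  rw [hgeom I]; ring
    have hD : ∑ I : Finset (Fin k),
        eps I * (if (N : ℤ) ∣ ∑ s ∈ I, v s then (N : ℂ) else 0) * (∑ s ∈ I, (μ s : ℂ)) ^ j
        = (N : ℂ) * ∑ I ∈ V', eps I * ee I ^ j := by
      rw [Finset.mul_sum, hV'def, Finset.sum_filter]
      apply Finset.sum_congr rfl
      intro I _
      rw [hee I]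
      split
      · ring
      · ring
    have hE : (N : ℂ) * ∑ I ∈ V', eps I * ee I ^ j = 0 := by rw [← hD]; exact hC.symm
    exact (mul_eq_zero.mp hE).resolve_left hNC
  -- Step C: vanishing against products
  have hpoly : ∀ R' : Finset (ZMod p), R'.card < mm → ∀ zf : ZMod p → ℤ,
      ∑ I ∈ V', eps I * ∏ r ∈ R', (ee I - (zf r : ℂ)) = 0 := by
    intro R' hR' zf
    have hexp : ∀ I : Finset (Fin k), ∏ r ∈ R', (ee I - (zf r : ℂ))
        = ∑ Q ∈ R'.powerset, ee I ^ Q.card * ∏ r ∈ R' \ Q, -(zf r : ℂ) := by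
      intro I
      calc ∏ r ∈ R', (ee I - (zf r : ℂ)) = ∏ r ∈ R', (ee I + -(zf r : ℂ)) := by
            apply Finset.prod_congr rfl; intros; ring
        _ = ∑ Q ∈ R'.powerset, (∏ _r ∈ Q, ee I) * ∏ r ∈ R' \ Q, -(zf r : ℂ) :=
            Finset.prod_add _ _ _
        _ = _ := by
            apply Finset.sum_congr rfl; intro Q _
            rw [Finset.prod_const]
    calc ∑ I ∈ V', eps I * ∏ r ∈ R', (ee I - (zf r : ℂ))
        = ∑ I ∈ V', ∑ Q ∈ R'.powerset,
            (∏ r ∈ R' \ Q, -(zf r : ℂ)) * (eps I * ee I ^ Q.card) := by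
          apply Finset.sum_congr rfl; intro I _
          rw [hexp I, Finset.mul_sum]
          apply Finset.sum_congr rfl; intro Q _; ring
      _ = ∑ Q ∈ R'.powerset,
            (∏ r ∈ R' \ Q, -(zf r : ℂ)) * ∑ I ∈ V', eps I * ee I ^ Q.card := by
          rw [Finset.sum_comm]
          apply Finset.sum_congr rfl; intro Q _
          rw [Finset.mul_sum]
      _ = 0 := by
          apply Finset.sum_eq_zero; intro Q hQ
          have hQc : Q.card < mm :=
            lt_of_le_of_lt (Finset.card_le_card (Finset.mem_powerset.mp hQ)) hR'
          rw [hkey Q.card hQc, mul_zero]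
  -- Step D: endgame
  have hSfin : S.Finite := Set.toFinite _
  set R : Finset (ZMod p) := hSfin.toFinset with hRdef
  have hmemR : ∀ r, r ∈ R ↔ r ∈ S := fun r => hSfin.mem_toFinset
  have hRcard : R.card < mm := by
    have := Set.ncard_eq_toFinset_card S hSfin
    rw [← hRdef] at this
    omega
  have hR0 : ∀ r ∈ R, r ≠ 0 := by
    intro r hr hr0
    obtain ⟨I, hne, hval, hnum⟩ := (hmemR r).mp hr
    obtain ⟨z, hz⟩ := hμint I hval
    apply hnone
    refine ⟨I, hne, hval, ?_⟩
    have hnumz : (∑ s ∈ I, μ s).num = z := by rw [hz]; exact Rat.num_intCast z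
    rw [hnumz] at hnum
    have hz0 : ((z : ℤ) : ZMod p) = 0 := by rw [hnum, hr0]
    obtain ⟨w, hw⟩ := (ZMod.intCast_zmod_eq_zero_iff_dvd z p).mp hz0
    exact ⟨w, by rw [hz, hw]; push_cast; ring⟩
  obtain ⟨zf, hzf⟩ : ∃ zf : ZMod p → ℤ, ∀ r, zf r = (r.val : ℤ) := ⟨_, fun _ => rfl⟩
  have hzfcast : ∀ r : ZMod p, ((zf r : ℤ) : ZMod p) = r := by
    intro r
    rw [hzf r]
    push_cast
    simp [ZMod.natCast_val, ZMod.cast_id]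
  have hzero := hpoly R hRcard zf
  have hemptyV : (∅ : Finset (Fin k)) ∈ V' := by
    rw [hV'def]
    exact Finset.mem_filter.mpr ⟨Finset.mem_univ _, by simp⟩
  rw [← Finset.add_sum_erase _ _ hemptyV] at hzero
  have hempty : eps ∅ * ∏ r ∈ R, (ee ∅ - (zf r : ℂ)) = ((∏ r ∈ R, (0 - zf r) : ℤ) : ℂ) := by
    rw [heps, hee]
    simp only [Finset.prod_empty, Finset.sum_empty, one_mul]
    push_cast
    rfl
  obtain ⟨EI, hEI⟩ : ∃ EI : Finset (Fin k) → ℤ, ∀ I ∈ V', (∑ s ∈ I, μ s : ℚ) = EI I := by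
    have hch : ∀ I ∈ V', ∃ z : ℤ, (∑ s ∈ I, μ s : ℚ) = z := by
      intro I h
      exact hμint I ((hvalid I).mpr (Finset.mem_filter.mp h).2)
    refine ⟨fun I => if h : I ∈ V' then (hch I h).choose else 0, ?_⟩
    intro I h
    simp only [dif_pos h]
    exact (hch I h).choose_spec
  have heeI : ∀ I ∈ V', ee I = ((EI I : ℤ) : ℂ) := by
    intro I h
    rw [hee I]
    have h1 : ((∑ s ∈ I, μ s : ℚ) : ℂ) = ((EI I : ℤ) : ℂ) := by
      rw [hEI I h]; push_cast; rfl
    rw [← h1]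
    push_cast
    rfl
  have hdvdterm : ∀ I ∈ V'.erase ∅, (p : ℤ) ∣ ∏ r ∈ R, (EI I - zf r) := by
    intro I hI
    have hIV : I ∈ V' := Finset.mem_of_mem_erase hI
    have hIne : I ≠ ∅ := Finset.ne_of_mem_erase hI
    have hrmem : ((EI I : ℤ) : ZMod p) ∈ R := by
      apply (hmemR _).mpr
      refine ⟨I, Finset.nonempty_iff_ne_empty.mpr hIne,
        (hvalid I).mpr (Finset.mem_filter.mp hIV).2, ?_⟩
      rw [hEI I hIV, Rat.num_intCast]
    have hd1 : (p : ℤ) ∣ (EI I - zf ((EI I : ℤ) : ZMod p)) := by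
      rw [← ZMod.intCast_zmod_eq_zero_iff_dvd]
      push_cast
      rw [hzfcast]
      ring
    exact dvd_trans hd1 (Finset.dvd_prod_of_mem (fun r => EI I - zf r) hrmem)
  have hterm2 : ∀ I ∈ V'.erase ∅, eps I * ∏ r ∈ R, (ee I - (zf r : ℂ))
      = (p : ℂ) * (eps I * (((∏ r ∈ R, (EI I - zf r)) / p : ℤ) : ℂ)) := by
    intro I hI
    have hIV : I ∈ V' := Finset.mem_of_mem_erase hI
    have hd := hdvdterm I hI
    have hprod : ∏ r ∈ R, (ee I - (zf r : ℂ)) = ((∏ r ∈ R, (EI I - zf r) : ℤ) : ℂ) := by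
      rw [heeI I hIV]
      push_cast
      rfl
    rw [hprod]
    have hc : (∏ r ∈ R, (EI I - zf r) : ℤ) = p * ((∏ r ∈ R, (EI I - zf r)) / p) :=
      (Int.mul_ediv_cancel' hd).symm
    calc eps I * ((∏ r ∈ R, (EI I - zf r) : ℤ) : ℂ)
        = eps I * (((p : ℤ) * ((∏ r ∈ R, (EI I - zf r)) / p) : ℤ) : ℂ) := by rw [← hc]
      _ = (p : ℂ) * (eps I * (((∏ r ∈ R, (EI I - zf r)) / p : ℤ) : ℂ)) := by
          push_cast
          ring
  set H0 : ℤ := ∏ r ∈ R, (0 - zf r) with hH0def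
  have hsum2 : ((H0 : ℤ) : ℂ)
      = (p : ℂ) * (-∑ I ∈ V'.erase ∅, eps I * (((∏ r ∈ R, (EI I - zf r)) / p : ℤ) : ℂ)) := by
    have h1 : ((H0 : ℤ) : ℂ) + ∑ I ∈ V'.erase ∅, eps I * ∏ r ∈ R, (ee I - (zf r : ℂ)) = 0 := by
      rw [← hempty]
      exact hzero
    have h2 : ∑ I ∈ V'.erase ∅, eps I * ∏ r ∈ R, (ee I - (zf r : ℂ))
        = (p : ℂ) * ∑ I ∈ V'.erase ∅, eps I * (((∏ r ∈ R, (EI I - zf r)) / p : ℤ) : ℂ) := by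
      rw [Finset.mul_sum]
      exact Finset.sum_congr rfl hterm2
    rw [h2] at h1
    linear_combination h1
  have hAint : IsIntegral ℤ
      (-∑ I ∈ V'.erase ∅, eps I * (((∏ r ∈ R, (EI I - zf r)) / p : ℤ) : ℂ)) := by
    rw [← mem_integralClosure_iff]
    apply Subalgebra.neg_mem
    apply Subalgebra.sum_mem
    intro I _
    apply Subalgebra.mul_mem
    · rw [heps I]
      apply Subalgebra.prod_mem
      intro s _
      apply Subalgebra.neg_mem
      rw [mem_integralClosure_iff]
      exact EE_isIntegral hN0 _
    · exact Subalgebra.intCast_mem _ _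
  have hpQ : ((p : ℚ)) ≠ 0 := Nat.cast_ne_zero.mpr hp.pos.ne'
  have hpC : ((p : ℂ)) ≠ 0 := Nat.cast_ne_zero.mpr hp.pos.ne'
  have hqC : (((H0 : ℚ) / (p : ℚ) : ℚ) : ℂ)
      = -∑ I ∈ V'.erase ∅, eps I * (((∏ r ∈ R, (EI I - zf r)) / p : ℤ) : ℂ) := by
    have hcast : (((H0 : ℚ) / (p : ℚ) : ℚ) : ℂ) = ((H0 : ℤ) : ℂ) / (p : ℂ) := by
      push_cast
      rfl
    rw [hcast, hsum2]
    field_simp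
  have h5 : IsIntegral ℤ ((H0 : ℚ) / (p : ℚ)) := by
    have h6 : IsIntegral ℤ ((((H0 : ℚ) / (p : ℚ) : ℚ) : ℂ)) := by rw [hqC]; exact hAint
    rw [← isIntegral_algebraMap_iff (algebraMap ℚ ℂ).injective]
    rwa [eq_ratCast (algebraMap ℚ ℂ)]
  obtain ⟨y, hy⟩ := IsIntegrallyClosed.isIntegral_iff.mp h5
  have h6 : (y : ℚ) * p = (H0 : ℚ) := by
    have h7 : (y : ℚ) = (H0 : ℚ) / (p : ℚ) := by
      rw [← hy]
      exact (eq_intCast (algebraMap ℤ ℚ) y).symm ▸ rfl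
    rw [h7, div_mul_cancel₀ _ hpQ]
  have h7 : y * p = H0 := by exact_mod_cast h6
  have hdvdH0 : (p : ℤ) ∣ H0 := ⟨y, by rw [← h7]; ring⟩
  have hprime : Prime (p : ℤ) := Nat.prime_iff_prime_int.mp hp
  rw [hH0def] at hdvdH0
  obtain ⟨r, hrR, hrdvd⟩ := hprime.exists_mem_finset_dvd hdvdH0
  have hd2 : (p : ℤ) ∣ (r.val : ℤ) := by
    rw [hzf r] at hrdvd
    have : (0 : ℤ) - (r.val : ℤ) = -(r.val : ℤ) := by ring
    rw [this, dvd_neg] at hrdvd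
    exact hrdvd
  have hvp : p ∣ r.val := by exact_mod_cast hd2
  have hlt : r.val < p := ZMod.val_lt r
  have hne0 : r.val ≠ 0 := fun h => hR0 r hrR ((ZMod.val_eq_zero r).mp h)
  have := Nat.le_of_dvd (Nat.pos_of_ne_zero hne0) hvp
  omega
end

section
/- Let A = {a_s(n_s)}_{s=1}^k be an m-cover of ℤ. Then for any m_1,...,m_k ∈ ℤ and any J ⊆ {1,...,k}, the set { Σ_{s∈I} a_s m_s/n_s − |I|/2 : I ⊆ {1,...,k} and Σ_{s∈I} m_s/n_s − Σ_{s∈J} m_s/n_s ∈ ℤ } has more than m elements. -/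
open Polynomial Finset

noncomputable def ee (t : ℂ) : ℂ := Complex.exp (2 * Real.pi * Complex.I * t)

lemma ee_add (s t : ℂ) : ee (s + t) = ee s * ee t := by
  rw [ee, ee, ee, mul_add, Complex.exp_add]

lemma ee_sum {α : Type*} (s : Finset α) (f : α → ℂ) : ee (∑ i ∈ s, f i) = ∏ i ∈ s, ee (f i) := by
  rw [ee, Finset.mul_sum, Complex.exp_sum]; rfl

lemma ee_int (z : ℤ) : ee (z : ℂ) = 1 := by
  rw [ee]
  rw [show 2 * (Real.pi:ℂ) * Complex.I * (z:ℂ) = (z:ℂ) * (2 * Real.pi * Complex.I) by ring]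
  exact Complex.exp_int_mul_two_pi_mul_I z

lemma ee_ne_zero (t : ℂ) : ee t ≠ 0 := Complex.exp_ne_zero _

lemma ee_eq_one_iff (t : ℂ) : ee t = 1 ↔ ∃ z : ℤ, t = (z : ℂ) := by
  rw [ee, Complex.exp_eq_one_iff]
  constructor
  · rintro ⟨z, hz⟩
    refine ⟨z, ?_⟩
    have h2 : (2 * (Real.pi:ℂ) * Complex.I) ≠ 0 := by
      simp [Real.pi_ne_zero, Complex.I_ne_zero]
    apply mul_left_cancel₀ h2
    rw [hz]; ring
  · rintro ⟨z, hz⟩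
    exact ⟨z, by rw [hz]; ring⟩

lemma ee_pow (t : ℂ) (x : ℕ) : ee t ^ x = ee ((x : ℂ) * t) := by
  rw [ee, ee, ← Complex.exp_nat_mul]
  congr 1; ring

lemma ee_half : ee (2⁻¹ : ℂ) = -1 := by
  rw [ee, show 2 * (Real.pi:ℂ) * Complex.I * 2⁻¹ = Real.pi * Complex.I by ring]
  exact Complex.exp_pi_mul_I

private lemma degree_sub_comp_lt {p : ℂ[X]} {c : ℂ} {n : ℕ} (hp : p.degree < (n+1 : ℕ)) :
    (p - p.comp (X + C c)).degree < (n : ℕ) := by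
  by_cases h0 : p - p.comp (X + C c) = 0
  · rw [h0, degree_zero]; exact WithBot.bot_lt_coe n
  have hpne : p ≠ 0 := by
    rintro rfl; simp at h0
  have hco : (p.comp (X + C c)).natDegree = p.natDegree := by
    rw [natDegree_comp, natDegree_X_add_C, mul_one]
  have hlc : p.leadingCoeff = (p.comp (X + C c)).leadingCoeff := by
    rw [leadingCoeff_comp (by rw [natDegree_X_add_C]; exact one_ne_zero),
      leadingCoeff_X_add_C, one_pow, mul_one]
  have hcone : p.comp (X + C c) ≠ 0 := by
    intro h
    apply hpne
    rw [← leadingCoeff_eq_zero, hlc, h, leadingCoeff_zero]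
  have hdeg : p.degree = (p.comp (X + C c)).degree := by
    rw [degree_eq_natDegree hpne, degree_eq_natDegree hcone, hco]
  have hlt := degree_sub_lt hdeg hpne hlc
  have hle : p.degree ≤ (n : ℕ) := by
    rw [degree_eq_natDegree hpne] at hp ⊢
    exact_mod_cast Nat.lt_succ_iff.mp (by exact_mod_cast hp)
  exact lt_of_lt_of_le hlt hle

private lemma lemA {k : ℕ} (z c : Fin k → ℂ) :
    ∀ (N : ℕ) (S U : Finset (Fin k)) (p : ℂ[X]), S ⊆ U → (∀ s ∈ S, z s = -1) →
      S.card = N → p.degree < (N : ℕ) →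
      ∑ I ∈ U.powerset, (∏ s ∈ I, z s) * p.eval (∑ s ∈ I, c s) = 0 := by
  intro N
  induction N with
  | zero =>
    intro S U p _ _ _ hdeg
    have : p = 0 := degree_eq_bot.mp (Nat.WithBot.lt_zero_iff.mp (by exact_mod_cast hdeg))
    simp [this]
  | succ N ih =>
    intro S U p hSU hz hcard hdeg
    obtain ⟨s0, hs0⟩ : S.Nonempty := Finset.card_pos.mp (by omega)
    have hs0U : s0 ∈ U := hSU hs0
    have hU : U = insert s0 (U.erase s0) := (Finset.insert_erase hs0U).symm
    rw [hU, Finset.sum_powerset_insert (Finset.notMem_erase s0 U), ← Finset.sum_add_distrib]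
    have hstep : ∀ I ∈ (U.erase s0).powerset,
        (∏ s ∈ I, z s) * p.eval (∑ s ∈ I, c s)
          + ((∏ s ∈ insert s0 I, z s) * p.eval (∑ s ∈ insert s0 I, c s))
        = (∏ s ∈ I, z s) * (p - p.comp (X + C (c s0))).eval (∑ s ∈ I, c s) := by
      intro I hI
      have hs0I : s0 ∉ I := fun h =>
        Finset.notMem_erase s0 U (Finset.mem_powerset.mp hI h)
      rw [Finset.prod_insert hs0I, Finset.sum_insert hs0I, hz s0 hs0]
      simp only [eval_sub, eval_comp, eval_add, eval_X, eval_C]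
      rw [add_comm (c s0)]
      ring
    rw [Finset.sum_congr rfl hstep]
    exact ih (S.erase s0) (U.erase s0) _ (Finset.erase_subset_erase s0 hSU)
      (fun s hs => hz s (Finset.mem_of_mem_erase hs))
      (by rw [Finset.card_erase_of_mem hs0, hcard]; rfl)
      (degree_sub_comp_lt hdeg)

/-- **Corollary 3.2.**
Let `{a s (n s)}_{s=1}^k` be an `m`-cover of `ℤ`.  For any `m₁,…,m_k ∈ ℤ` and any
`J ⊆ {1,…,k}`, the set
`{ ∑_{s∈I} a_s m_s/n_s − |I|/2 : I ⊆ {1,…,k}, ∑_{s∈I} m_s/n_s − ∑_{s∈J} m_s/n_s ∈ ℤ }`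
has more than `m` elements. -/
theorem stmt11 (mm : ℕ) (k : ℕ) (a : Fin k → ℤ) (n : Fin k → ℕ) (hn : ∀ s, 0 < n s)
    (hcover : ∀ x : ℤ,
      mm ≤ (Finset.univ.filter fun s : Fin k => (n s : ℤ) ∣ x - a s).card)
    (m : Fin k → ℤ) (J : Finset (Fin k)) :
    mm < {q : ℚ | ∃ I : Finset (Fin k),
      (∃ z : ℤ, ∑ s ∈ I, (m s : ℚ) / (n s : ℚ) - ∑ s ∈ J, (m s : ℚ) / (n s : ℚ) = z) ∧
      ∑ s ∈ I, (a s * m s : ℚ) / (n s : ℚ) - (I.card : ℚ) / 2 = q}.ncard := by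
  classical
  -- rational-valued data
  set qb : Finset (Fin k) → ℚ := fun I => ∑ s ∈ I, (m s : ℚ) / (n s : ℚ) with hqb
  set qq : Finset (Fin k) → ℚ :=
    fun I => ∑ s ∈ I, ((a s * m s : ℚ) / (n s : ℚ) - 1/2) with hqq
  have hqq' : ∀ I : Finset (Fin k),
      qq I = ∑ s ∈ I, (a s * m s : ℚ) / (n s : ℚ) - (I.card : ℚ) / 2 := by
    intro I
    simp only [hqq, Finset.sum_sub_distrib, Finset.sum_const, nsmul_eq_mul]
    ring
  set Cf : Finset (Finset (Fin k)) :=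
    Finset.univ.filter (fun I : Finset (Fin k) => ∃ z : ℤ, qb I - qb J = z) with hCf
  have hJC : J ∈ Cf := by
    rw [hCf, Finset.mem_filter]
    exact ⟨Finset.mem_univ _, ⟨0, by simp⟩⟩
  -- the set in question is the coercion of a finset
  have hset : {q : ℚ | ∃ I : Finset (Fin k),
      (∃ z : ℤ, ∑ s ∈ I, (m s : ℚ) / (n s : ℚ) - ∑ s ∈ J, (m s : ℚ) / (n s : ℚ) = z) ∧
      ∑ s ∈ I, (a s * m s : ℚ) / (n s : ℚ) - (I.card : ℚ) / 2 = q}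
      = ↑(Cf.image qq) := by
    ext q
    simp only [Set.mem_setOf_eq, Finset.coe_image, Set.mem_image, Finset.mem_coe,
      hCf, Finset.mem_filter, Finset.mem_univ, true_and]
    constructor
    · rintro ⟨I, hz, hval⟩
      exact ⟨I, hz, by rw [hqq' I]; exact hval⟩
    · rintro ⟨I, hz, hval⟩
      exact ⟨I, hz, by rw [← hqq' I]; exact hval⟩
  rw [hset, Set.ncard_coe_finset]
  by_contra hcon
  push_neg at hcon
  -- notation
  set Nn := ∏ s : Fin k, n s with hNn
  have hNpos : 0 < Nn := Finset.prod_pos (fun s _ => hn s)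
  have hnC : ∀ s, (n s : ℂ) ≠ 0 := fun s => by exact_mod_cast (hn s).ne'
  set A : Finset (Fin k) → ℂ := fun I => ∑ s ∈ I, (a s : ℂ) * (m s : ℂ) / (n s : ℂ) with hA
  set B : Finset (Fin k) → ℂ := fun I => ∑ s ∈ I, (m s : ℂ) / (n s : ℂ) with hB
  have hBq : ∀ I : Finset (Fin k), B I = ((qb I : ℚ) : ℂ) := by
    intro I
    simp only [hB, hqb]
    push_cast
    rfl
  have hqqC : ∀ I : Finset (Fin k), ((qq I : ℚ) : ℂ) = A I - (I.card : ℂ) * 2⁻¹ := by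
    intro I
    rw [hqq' I]
    push_cast
    simp only [hA]
    ring
  -- the key vanishing identity
  have key : ∀ p : ℂ[X], p.degree < (mm : ℕ) →
      ∑ I ∈ Cf, ee (-((qq I : ℚ) : ℂ)) * p.eval ((qq I : ℚ) : ℂ) = 0 := by
    intro p hdeg
    have hsumc : ∀ I : Finset (Fin k),
        (∑ s ∈ I, ((a s : ℂ) * (m s : ℂ) / (n s : ℂ) - 2⁻¹)) = ((qq I : ℚ) : ℂ) := by
      intro I
      simp only [hqq]
      push_cast
      apply Finset.sum_congr rfl
      intro s _
      norm_num
    have hprod : ∀ (x : ℕ) (I : Finset (Fin k)),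
        (∏ s ∈ I, -(ee ((m s : ℂ) * ((x : ℂ) - (a s : ℂ)) / (n s : ℂ))))
          = (-1 : ℂ) ^ I.card * ee ((x : ℂ) * B I - A I) := by
      intro x I
      have h1 : (∏ s ∈ I, -(ee ((m s : ℂ) * ((x : ℂ) - (a s : ℂ)) / (n s : ℂ))))
          = (∏ s ∈ I, (-1 : ℂ)) * ∏ s ∈ I, ee ((m s : ℂ) * ((x : ℂ) - (a s : ℂ)) / (n s : ℂ)) := by
        rw [← Finset.prod_mul_distrib]
        apply Finset.prod_congr rfl
        intro s _
        ring
      rw [h1, Finset.prod_const, ← ee_sum]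
      congr 1
      simp only [hB, hA, Finset.mul_sum, ← Finset.sum_sub_distrib]
      congr 1
      apply Finset.sum_congr rfl
      intro s _
      field_simp
    have perx : ∀ x : ℕ, ∑ I ∈ (Finset.univ : Finset (Finset (Fin k))),
        ((-1 : ℂ)) ^ I.card * ee ((x : ℂ) * B I - A I) * p.eval ((qq I : ℚ) : ℂ) = 0 := by
      intro x
      have happ := lemA (fun s => -(ee ((m s : ℂ) * ((x : ℂ) - (a s : ℂ)) / (n s : ℂ))))
        (fun s => (a s : ℂ) * (m s : ℂ) / (n s : ℂ) - 2⁻¹)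
        (Finset.univ.filter fun s : Fin k => (n s : ℤ) ∣ (x : ℤ) - a s).card
        (Finset.univ.filter fun s : Fin k => (n s : ℤ) ∣ (x : ℤ) - a s)
        Finset.univ p (Finset.subset_univ _) ?_ rfl ?_
      · rw [Finset.powerset_univ] at happ
        rw [← happ]
        apply Finset.sum_congr rfl
        intro I _
        rw [hsumc I, hprod x I]
      · intro s hs
        simp only [Finset.mem_filter, Finset.mem_univ, true_and] at hs
        obtain ⟨y, hy⟩ := hs
        have harg : (m s : ℂ) * ((x : ℂ) - (a s : ℂ)) / (n s : ℂ) = ((m s * y : ℤ) : ℂ) := by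
          have hxa : ((x : ℂ) - (a s : ℂ)) = (n s : ℂ) * (y : ℂ) := by exact_mod_cast hy
          rw [hxa]
          push_cast
          rw [mul_div_assoc, mul_div_cancel_left₀ _ (hnC s)]
        show -(ee ((m s : ℂ) * ((x : ℂ) - (a s : ℂ)) / (n s : ℂ))) = -1
        rw [harg, ee_int]
      · exact lt_of_lt_of_le hdeg (by exact_mod_cast hcover (x : ℤ))
    have hNint : ∀ I : Finset (Fin k), ∃ zI : ℤ, (Nn : ℚ) * qb I = (zI : ℚ) := by
      intro I
      refine ⟨∑ s ∈ I, ((Nn / n s : ℕ) : ℤ) * m s, ?_⟩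
      have hR : ((∑ s ∈ I, ((Nn / n s : ℕ) : ℤ) * m s : ℤ) : ℚ)
          = ∑ s ∈ I, ((Nn / n s : ℕ) : ℚ) * (m s : ℚ) := by
        push_cast
        rfl
      rw [hR, hqb, Finset.mul_sum]
      apply Finset.sum_congr rfl
      intro s _
      have hdvd : n s ∣ Nn := Finset.dvd_prod_of_mem n (Finset.mem_univ s)
      have hcast : ((Nn / n s : ℕ) : ℚ) = (Nn : ℚ) / (n s : ℚ) :=
        Nat.cast_div hdvd (by exact_mod_cast (hn s).ne')
      rw [hcast]
      have hns : (n s : ℚ) ≠ 0 := by exact_mod_cast (hn s).ne'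
      field_simp
    have geo : ∀ I : Finset (Fin k), ∑ x ∈ Finset.range Nn, (ee (B I - B J)) ^ x
        = if (∃ z : ℤ, qb I - qb J = (z : ℚ)) then (Nn : ℂ) else 0 := by
      intro I
      by_cases hc : ∃ z : ℤ, qb I - qb J = (z : ℚ)
      · rw [if_pos hc]
        obtain ⟨z, hz⟩ := hc
        have h1 : ee (B I - B J) = 1 := by
          have : B I - B J = ((z : ℤ) : ℂ) := by
            rw [hBq, hBq]
            exact_mod_cast congrArg (fun t : ℚ => (t : ℂ)) hz
          rw [this, ee_int]
        simp [h1]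
      · rw [if_neg hc]
        have hne : ee (B I - B J) ≠ 1 := by
          intro h1
          obtain ⟨z, hz⟩ := (ee_eq_one_iff _).mp h1
          apply hc
          refine ⟨z, ?_⟩
          rw [hBq, hBq] at hz
          exact_mod_cast hz
        rw [geom_sum_eq hne]
        have hNone : ee (B I - B J) ^ Nn = 1 := by
          rw [ee_pow]
          obtain ⟨zI, hzI⟩ := hNint I
          obtain ⟨zJ, hzJ⟩ := hNint J
          have harg : (Nn : ℂ) * (B I - B J) = ((zI - zJ : ℤ) : ℂ) := by
            rw [hBq, hBq]
            have hzI' : (Nn : ℂ) * ((qb I : ℚ) : ℂ) = ((zI : ℤ) : ℂ) := by exact_mod_cast congrArg (fun t : ℚ => (t : ℂ)) hzI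
            have hzJ' : (Nn : ℂ) * ((qb J : ℚ) : ℂ) = ((zJ : ℤ) : ℂ) := by exact_mod_cast congrArg (fun t : ℚ => (t : ℂ)) hzJ
            push_cast at hzI' hzJ' ⊢
            linear_combination hzI' - hzJ'
          rw [harg, ee_int]
        rw [hNone]
        simp
    have main : (0 : ℂ) = ∑ x ∈ Finset.range Nn, ee (-(B J) * (x : ℂ)) *
        (∑ I ∈ (Finset.univ : Finset (Finset (Fin k))),
          ((-1 : ℂ)) ^ I.card * ee ((x : ℂ) * B I - A I) * p.eval ((qq I : ℚ) : ℂ)) := by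
      simp only [perx, mul_zero, Finset.sum_const_zero]
    have swap : ∑ x ∈ Finset.range Nn, ee (-(B J) * (x : ℂ)) *
        (∑ I ∈ (Finset.univ : Finset (Finset (Fin k))),
          ((-1 : ℂ)) ^ I.card * ee ((x : ℂ) * B I - A I) * p.eval ((qq I : ℚ) : ℂ))
        = ∑ I ∈ (Finset.univ : Finset (Finset (Fin k))),
          (((-1 : ℂ)) ^ I.card * ee (-(A I)) * p.eval ((qq I : ℚ) : ℂ)) *
            ∑ x ∈ Finset.range Nn, (ee (B I - B J)) ^ x := by
      simp only [Finset.mul_sum]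
      rw [Finset.sum_comm]
      apply Finset.sum_congr rfl
      intro I _
      apply Finset.sum_congr rfl
      intro x _
      rw [ee_pow]
      have h1 : ee (-(B J) * (x : ℂ)) * ee ((x : ℂ) * B I - A I)
          = ee (-(A I)) * ee ((x : ℂ) * (B I - B J)) := by
        rw [← ee_add, ← ee_add]
        congr 1
        ring
      linear_combination ((-1 : ℂ) ^ I.card * p.eval ((qq I : ℚ) : ℂ)) * h1
    rw [swap] at main
    simp only [geo, mul_ite, mul_zero] at main
    rw [← Finset.sum_filter] at main
    rw [← hCf] at main
    rw [← Finset.sum_mul] at main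
    have hNne : ((Nn : ℕ) : ℂ) ≠ 0 := by exact_mod_cast hNpos.ne'
    have hzero : ∑ I ∈ Cf, ((-1 : ℂ)) ^ I.card * ee (-(A I)) * p.eval ((qq I : ℚ) : ℂ) = 0 :=
      (mul_eq_zero.mp main.symm).resolve_right hNne
    rw [← hzero]
    apply Finset.sum_congr rfl
    intro I _
    have hw : ee (-((qq I : ℚ) : ℂ)) = (-1 : ℂ) ^ I.card * ee (-(A I)) := by
      have harg : -((qq I : ℚ) : ℂ) = ((I.card : ℕ) : ℂ) * 2⁻¹ + -(A I) := by
        rw [hqqC I]; ring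
      rw [harg, ee_add, ← ee_pow, ee_half]
    rw [hw]
  -- now the interpolation polynomial
  set Qs := Cf.image qq with hQs
  have hQJ : qq J ∈ Qs := Finset.mem_image_of_mem qq hJC
  set p : ℂ[X] := ∏ r ∈ Qs.erase (qq J), (X - C ((r : ℚ) : ℂ)) with hp
  have hdegp : p.degree = (((Qs.erase (qq J)).card : ℕ) : WithBot ℕ) := by
    rw [hp, degree_prod]
    simp [degree_X_sub_C]
  have hcardlt : (Qs.erase (qq J)).card < mm := by
    have h1 : 0 < Qs.card := Finset.card_pos.mpr ⟨_, hQJ⟩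
    have h2 : (Qs.erase (qq J)).card = Qs.card - 1 := Finset.card_erase_of_mem hQJ
    omega
  have hdeg : p.degree < (mm : ℕ) := by
    rw [hdegp]
    exact_mod_cast hcardlt
  have hkey := key p hdeg
  rw [← Finset.sum_filter_add_sum_filter_not Cf (fun I => qq I = qq J)] at hkey
  have hzero2 : ∑ I ∈ Cf.filter (fun I => ¬ qq I = qq J),
      ee (-((qq I : ℚ) : ℂ)) * p.eval ((qq I : ℚ) : ℂ) = 0 := by
    apply Finset.sum_eq_zero
    intro I hI
    simp only [Finset.mem_filter] at hI
    have hmem : qq I ∈ Qs.erase (qq J) :=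
      Finset.mem_erase.mpr ⟨hI.2, Finset.mem_image_of_mem qq hI.1⟩
    have : p.eval ((qq I : ℚ) : ℂ) = 0 := by
      rw [hp, eval_prod]
      apply Finset.prod_eq_zero hmem
      simp
    rw [this, mul_zero]
  rw [hzero2, add_zero] at hkey
  have hconst : ∑ I ∈ Cf.filter (fun I => qq I = qq J),
      ee (-((qq I : ℚ) : ℂ)) * p.eval ((qq I : ℚ) : ℂ)
      = ((Cf.filter (fun I => qq I = qq J)).card : ℂ) *
        (ee (-((qq J : ℚ) : ℂ)) * p.eval ((qq J : ℚ) : ℂ)) := by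
    rw [Finset.sum_congr rfl (fun I hI => ?_), Finset.sum_const, nsmul_eq_mul]
    have : qq I = qq J := (Finset.mem_filter.mp hI).2
    rw [this]
  rw [hconst] at hkey
  have hcardpos : 0 < (Cf.filter (fun I => qq I = qq J)).card :=
    Finset.card_pos.mpr ⟨J, Finset.mem_filter.mpr ⟨hJC, rfl⟩⟩
  have hevalne : p.eval ((qq J : ℚ) : ℂ) ≠ 0 := by
    rw [hp, eval_prod]
    apply Finset.prod_ne_zero_iff.mpr
    intro r hr
    have hrne : r ≠ qq J := (Finset.mem_erase.mp hr).1
    simp only [eval_sub, eval_X, eval_C, sub_ne_zero]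
    intro h
    exact hrne (by exact_mod_cast h.symm)
  have : ((Cf.filter (fun I => qq I = qq J)).card : ℂ) ≠ 0 := by
    exact_mod_cast hcardpos.ne'
  exact (this (by
    rcases mul_eq_zero.mp hkey with h | h
    · exact h
    · exact absurd ((mul_eq_zero.mp h).resolve_left (ee_ne_zero _)) hevalne))
end

section
/- Let A = {a_s(n_s)}_{s=1}^k be an m-cover of ℤ, let m_1,...,m_k ∈ ℤ, and let μ_1,...,μ_k be positive rational numbers such that Σ_{s∈I} μ_s ∈ ℤ for every I ⊆ {1,...,k} with Σ_{s∈I} m_s/n_s ∈ ℤ. Then the set { Σ_{s∈I} μ_s : I nonempty, I ⊆ {1,...,k}, Σ_{s∈I} m_s/n_s ∈ ℤ } has at least m elements. In particular, the set { |I| : I nonempty, I ⊆ {1,...,k}, Σ_{s∈I} m_s/n_s ∈ ℤ } has at least m elements. -/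
set_option linter.unusedVariables false

open Polynomial

theorem aux_card_support : ∀ (d : ℕ) (Q : ℂ[X]), Q.natDegree ≤ d → Q ≠ 0 →
    ∀ m : ℕ, (1 - X) ^ m ∣ Q → m < Q.support.card := by
  intro d
  induction d with
  | zero =>
    intro Q hdeg hQ m hdvd
    match m with
    | 0 => simpa [Finset.card_pos] using Polynomial.support_nonempty.mpr hQ
    | m + 1 =>
      exfalso
      obtain ⟨S, hS⟩ := hdvd
      have hC : Q = C (Q.coeff 0) := Q.eq_C_of_natDegree_le_zero hdeg
      have h1 : Q.eval 1 = 0 := by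
        rw [hS]; simp
      rw [hC] at h1
      simp at h1
      apply hQ
      rw [hC, h1, map_zero]
  | succ d ih =>
    intro Q hdeg hQ m hdvd
    match m with
    | 0 => simpa [Finset.card_pos] using Polynomial.support_nonempty.mpr hQ
    | m + 1 =>
      -- natDegree Q ≠ 0
      have hnd : Q.natDegree ≠ 0 := by
        intro h0
        obtain ⟨S, hS⟩ := hdvd
        have hC : Q = C (Q.coeff 0) := Q.eq_C_of_natDegree_le_zero (le_of_eq h0)
        have h1 : Q.eval 1 = 0 := by rw [hS]; simp
        rw [hC] at h1; simp at h1
        exact hQ (by rw [hC, h1, map_zero])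
      by_cases h0 : Q.coeff 0 = 0
      · -- Q = X * R
        obtain ⟨R, hR⟩ := (X_dvd_iff).mpr h0
        have hRne : R ≠ 0 := by rintro rfl; simp at hR; exact hQ hR
        have hcop1 : IsCoprime (1 - X : ℂ[X]) X := ⟨1, 1, by ring⟩
        have hcop : IsCoprime ((1 - X : ℂ[X]) ^ (m + 1)) X := hcop1.pow_left
        have hdvdR : (1 - X : ℂ[X]) ^ (m + 1) ∣ R := by
          refine hcop.dvd_of_dvd_mul_left ?_
          rwa [← hR]
        have hdegR : R.natDegree ≤ d := by
          have : Q.natDegree = 1 + R.natDegree := by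
            rw [hR, natDegree_mul X_ne_zero hRne, natDegree_X]
          omega
        have hlt := ih R hdegR hRne (m + 1) hdvdR
        have hcard : R.support.card ≤ Q.support.card := by
          apply Finset.card_le_card_of_injOn (fun e => e + 1)
          · intro e he
            simp only [Finset.mem_coe] at he ⊢; rw [mem_support_iff] at he ⊢
            rwa [hR, coeff_X_mul]
          · intro x _ y _ h; exact add_left_injective 1 h
        omega
      · -- derivative
        have h1Q : Q.eval 1 = 0 := by
          obtain ⟨S, hS⟩ := hdvd; rw [hS]; simp
        have hQ' : derivative Q ≠ 0 := by
          intro h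
          exact hnd (natDegree_eq_zero_of_derivative_eq_zero h)
        have hdvd' : (1 - X : ℂ[X]) ^ m ∣ derivative Q := by
          obtain ⟨S, hS⟩ := hdvd
          refine ⟨C ((m : ℂ) + 1) * (-1) * S + (1 - X) * derivative S, ?_⟩
          rw [hS, derivative_mul, derivative_pow]
          push_cast
          ring_nf
          rw [derivative_sub, derivative_one, derivative_X]
          ring
        have hdeg' : (derivative Q).natDegree ≤ d := by
          have := natDegree_derivative_lt hnd
          omega
        have hlt := ih (derivative Q) hdeg' hQ' m hdvd'
        have hsub : insert 0 ((derivative Q).support.image (fun e => e + 1)) ⊆ Q.support := by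
          intro e he
          rcases Finset.mem_insert.mp he with rfl | he
          · exact mem_support_iff.mpr h0
          · obtain ⟨t, ht, rfl⟩ := Finset.mem_image.mp he
            rw [mem_support_iff] at ht ⊢
            intro hc
            apply ht
            rw [coeff_derivative, hc, zero_mul]
        have hcard := Finset.card_le_card hsub
        rw [Finset.card_insert_of_notMem (by simp)] at hcard
        rw [Finset.card_image_of_injective _ (add_left_injective 1)] at hcard
        omega

open Polynomial

theorem zpow_sum' {ι : Type*} (ζ : ℂ) (hζ : ζ ≠ 0) (I : Finset ι) (f : ι → ℤ) :
    ζ ^ (∑ s ∈ I, f s) = ∏ s ∈ I, ζ ^ (f s) := by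
  classical
  induction I using Finset.induction with
  | empty => simp
  | @insert _ _ h ih => rw [Finset.sum_insert h, Finset.prod_insert h, zpow_add₀ hζ, ih]

theorem aux_core (mm k : ℕ) (a : Fin k → ℤ) (n : Fin k → ℕ) (hn : ∀ s, 0 < n s)
    (hcover : ∀ x : ℤ,
      mm ≤ (Finset.univ.filter fun s : Fin k => (n s : ℤ) ∣ x - a s).card)
    (m : Fin k → ℤ) (p : Fin k → ℕ) (hp : ∀ s, 0 < p s) :
    mm ≤ {e : ℕ | ∃ I : Finset (Fin k), I.Nonempty ∧
        (∃ z : ℤ, ∑ s ∈ I, (m s : ℚ) / (n s : ℚ) = z) ∧ ∑ s ∈ I, p s = e}.ncard := by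
  classical
  set N : ℕ := Finset.univ.lcm n with hNdef
  have hN0 : N ≠ 0 := by
    rw [hNdef]
    intro h
    rw [Finset.lcm_eq_zero_iff] at h
    obtain ⟨s, _, hs⟩ := h
    exact (hn s).ne' hs
  have hdvdN : ∀ s, n s ∣ N := fun s => Finset.dvd_lcm (Finset.mem_univ s)
  set ζ : ℂ := Complex.exp (2 * Real.pi * Complex.I / N) with hζdef
  have hζ : IsPrimitiveRoot ζ N := Complex.isPrimitiveRoot_exp N hN0
  have hζ0 : ζ ≠ 0 := by
    rw [hζdef]; exact Complex.exp_ne_zero _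
  -- notation
  set w : Fin k → ℤ := fun s => ((N / n s : ℕ) : ℤ) with hwdef
  have hnw : ∀ s, (n s : ℤ) * w s = (N : ℤ) := by
    intro s
    have h : n s * (N / n s) = N := Nat.mul_div_cancel' (hdvdN s)
    show (n s : ℤ) * ((N / n s : ℕ) : ℤ) = (N : ℤ)
    exact_mod_cast h
  set E : Finset (Fin k) → ℕ := fun I => ∑ s ∈ I, p s with hEdef
  set cc : Finset (Fin k) → ℤ := fun I => ∑ s ∈ I, m s * w s with hccdef
  set dd : Finset (Fin k) → ℤ := fun I => ∑ s ∈ I, m s * a s * w s with hdddef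
  set g : Fin k → ℕ → ℂ := fun s x => ζ ^ (m s * ((x : ℤ) - a s) * w s) with hgdef
  set P : ℕ → ℂ[X] := fun x => ∏ s, (1 - C (g s x) * X ^ (p s)) with hPdef
  set Q : ℂ[X] := ∑ x ∈ Finset.range N, P x with hQdef
  -- Step 1: divisibility of each P x
  have hdvdP : ∀ x : ℕ, (1 - X : ℂ[X]) ^ mm ∣ P x := by
    intro x
    set F : Finset (Fin k) := Finset.univ.filter fun s => (n s : ℤ) ∣ (x : ℤ) - a s with hF
    have hcard : mm ≤ F.card := hcover x
    have h1 : ∀ s ∈ F, (1 - X : ℂ[X]) ∣ (1 - C (g s x) * X ^ (p s)) := by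
      intro s hs
      rw [hF, Finset.mem_filter] at hs
      obtain ⟨t, ht⟩ := hs.2
      have hg1 : g s x = 1 := by
        rw [hgdef]
        simp only
        rw [ht]
        have : m s * ((n s : ℤ) * t) * w s = (m s * t) * ((n s : ℤ) * w s) := by ring
        rw [this, hnw s]
        have h2 : ζ ^ (m s * t * (N : ℤ)) = (ζ ^ (N : ℕ)) ^ (m s * t) := by
          rw [← zpow_natCast ζ N, ← zpow_mul, mul_comm]
        rw [h2, hζ.pow_eq_one, one_zpow]
      rw [hg1, map_one, one_mul]
      have := sub_dvd_pow_sub_pow (1 : ℂ[X]) X (p s)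
      simpa using this
    calc (1 - X : ℂ[X]) ^ mm ∣ (1 - X : ℂ[X]) ^ F.card := pow_dvd_pow _ hcard
    _ = ∏ _s ∈ F, (1 - X : ℂ[X]) := by rw [Finset.prod_const]
    _ ∣ ∏ s ∈ F, (1 - C (g s x) * X ^ (p s)) := Finset.prod_dvd_prod_of_dvd _ _ h1
    _ ∣ P x := Finset.prod_dvd_prod_of_subset F Finset.univ _ (Finset.subset_univ F)
  have hdvdQ : (1 - X : ℂ[X]) ^ mm ∣ Q := by
    rw [hQdef]
    exact Finset.dvd_sum fun x _ => hdvdP x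
  -- Step 2: expansion
  have hPx : ∀ x : ℕ, P x = ∑ I ∈ Finset.univ.powerset,
      C ((-1) ^ I.card * ζ ^ (cc I * (x : ℤ) - dd I)) * X ^ (E I) := by
    intro x
    rw [hPdef]
    simp only
    have := Finset.prod_add (fun s : Fin k => -(C (g s x) * X ^ (p s))) (fun _ => (1 : ℂ[X]))
      Finset.univ
    have heq : ∀ s : Fin k, (1 : ℂ[X]) - C (g s x) * X ^ (p s)
        = -(C (g s x) * X ^ (p s)) + 1 := by intro s; ring
    rw [Finset.prod_congr rfl fun s _ => heq s, this]
    apply Finset.sum_congr rfl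
    intro I hI
    rw [Finset.prod_const_one, mul_one]
    have hneg : ∏ i ∈ I, -(C (g i x) * X ^ p i)
        = (-1) ^ I.card * ∏ i ∈ I, (C (g i x) * X ^ p i) := by
      rw [← Finset.prod_const (-1 : ℂ[X]), ← Finset.prod_mul_distrib]
      exact Finset.prod_congr rfl fun s _ => by ring
    rw [hneg]
    have hprod : ∏ s ∈ I, (C (g s x) * X ^ (p s)) = C (∏ s ∈ I, g s x) * X ^ (E I) := by
      rw [Finset.prod_mul_distrib, map_prod, hEdef, Finset.prod_pow_eq_pow_sum]
    rw [hprod]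
    have hg : ∏ s ∈ I, g s x = ζ ^ (cc I * (x : ℤ) - dd I) := by
      rw [hgdef]
      simp only
      rw [← zpow_sum' ζ hζ0]
      congr 1
      rw [hccdef, hdddef]
      simp only
      rw [Finset.sum_mul, ← Finset.sum_sub_distrib]
      apply Finset.sum_congr rfl
      intro s _
      ring
    rw [hg, map_mul, map_pow, map_neg, map_one]
    ring
  -- geometric sum
  have hgeo : ∀ c0 : ℤ, (∑ x ∈ Finset.range N, (ζ ^ c0) ^ x)
      = if (N : ℤ) ∣ c0 then (N : ℂ) else 0 := by
    intro c0
    by_cases h : (N : ℤ) ∣ c0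
    · rw [if_pos h]
      have : ζ ^ c0 = 1 := (hζ.zpow_eq_one_iff_dvd c0).mpr h
      simp [this]
    · rw [if_neg h]
      have hne : ζ ^ c0 ≠ 1 := fun hh => h ((hζ.zpow_eq_one_iff_dvd c0).mp hh)
      rw [geom_sum_eq hne]
      have : (ζ ^ c0) ^ N = 1 := by
        rw [← zpow_natCast (ζ ^ c0) N, ← zpow_mul, mul_comm, zpow_mul, zpow_natCast,
          hζ.pow_eq_one, one_zpow]
      rw [this, sub_self, zero_div]
  -- Q as a sum over subsets
  have hQ : Q = ∑ I ∈ Finset.univ.powerset,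
      C ((-1) ^ I.card * ζ ^ (-(dd I)) * (if (N : ℤ) ∣ cc I then (N : ℂ) else 0)) * X ^ (E I) := by
    rw [hQdef]
    rw [Finset.sum_congr rfl fun x _ => hPx x, Finset.sum_comm]
    apply Finset.sum_congr rfl
    intro I _
    rw [← Finset.sum_mul]
    congr 1
    rw [← map_sum]
    congr 1
    rw [← hgeo (cc I), Finset.mul_sum]
    apply Finset.sum_congr rfl
    intro x _
    rw [mul_assoc]
    congr 1
    rw [← zpow_natCast (ζ ^ cc I) x, ← zpow_mul, ← zpow_add₀ hζ0]
    congr 1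
    ring
  -- support membership gives witnesses
  have hsupp : ∀ e ∈ Q.support, ∃ I : Finset (Fin k), (N : ℤ) ∣ cc I ∧ E I = e := by
    intro e he
    by_contra hcon
    push_neg at hcon
    rw [mem_support_iff] at he
    apply he
    rw [hQ, finset_sum_coeff]
    apply Finset.sum_eq_zero
    intro I _
    rw [coeff_C_mul, coeff_X_pow]
    by_cases hE : E I = e
    · have hnd : ¬ (N : ℤ) ∣ cc I := fun h => hcon I h hE
      simp [hnd]
    · simp [hE, Ne.symm hE]
  -- coefficient 0 of Q is N
  have hc0 : Q.coeff 0 = (N : ℂ) := by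
    rw [coeff_zero_eq_eval_zero, hQdef, eval_finset_sum]
    have : ∀ x ∈ Finset.range N, (P x).eval 0 = 1 := by
      intro x _
      rw [hPdef]
      simp only [eval_prod]
      apply Finset.prod_eq_one
      intro s _
      rw [eval_sub, eval_one, eval_mul, eval_pow, eval_X, zero_pow (hp s).ne', mul_zero, sub_zero]
    rw [Finset.sum_congr rfl this, Finset.sum_const, Finset.card_range, nsmul_eq_mul, mul_one]
  have hQne : Q ≠ 0 := by
    intro h
    rw [h, coeff_zero] at hc0
    exact_mod_cast hN0 (by exact_mod_cast hc0.symm)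
  have hmm1 : mm < Q.support.card :=
    aux_card_support Q.natDegree Q le_rfl hQne mm hdvdQ
  have h0mem : 0 ∈ Q.support := mem_support_iff.mpr (by rw [hc0]; exact_mod_cast Nat.cast_ne_zero.mpr hN0)
  -- the finset of good exponents
  have herase : mm ≤ (Q.support.erase 0).card := by
    rw [Finset.card_erase_of_mem h0mem]
    omega
  -- inclusion into the target set
  set T : Set ℕ := {e : ℕ | ∃ I : Finset (Fin k), I.Nonempty ∧
      (∃ z : ℤ, ∑ s ∈ I, (m s : ℚ) / (n s : ℚ) = z) ∧ ∑ s ∈ I, p s = e} with hTdef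
  have hsubT : ↑(Q.support.erase 0) ⊆ T := by
    intro e he
    rw [Finset.coe_erase, Set.mem_diff] at he
    obtain ⟨I, hIdvd, hIE⟩ := hsupp e he.1
    have hIne : I.Nonempty := by
      rcases Finset.eq_empty_or_nonempty I with rfl | h
      · exfalso
        apply he.2
        have : E (∅ : Finset (Fin k)) = 0 := by rw [hEdef]; simp
        rw [this] at hIE
        simpa using hIE.symm
      · exact h
    refine ⟨I, hIne, ?_, hIE⟩
    obtain ⟨z, hz⟩ := hIdvd
    refine ⟨z, ?_⟩
    have hsum : ∑ s ∈ I, (m s : ℚ) / (n s : ℚ) = (cc I : ℚ) / (N : ℚ) := by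
      rw [hccdef]
      push_cast
      rw [Finset.sum_div]
      apply Finset.sum_congr rfl
      intro s _
      have hw : ((n s : ℚ)) * ((w s : ℚ)) = (N : ℚ) := by exact_mod_cast congrArg (Int.cast : ℤ → ℚ) (hnw s)
      have hn0 : (n s : ℚ) ≠ 0 := Nat.cast_ne_zero.mpr (hn s).ne'
      have hN0' : (N : ℚ) ≠ 0 := Nat.cast_ne_zero.mpr hN0
      field_simp
      rw [← hw]
      ring
    rw [hsum, hz]
    push_cast
    rw [mul_comm]
    have hN0' : (N : ℚ) ≠ 0 := Nat.cast_ne_zero.mpr hN0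
    field_simp
  -- finiteness of T
  have hTfin : T.Finite := by
    apply Set.Finite.subset (Set.finite_range (fun I : Finset (Fin k) => ∑ s ∈ I, p s))
    intro e he
    obtain ⟨I, _, _, hIE⟩ := he
    exact ⟨I, hIE⟩
  calc mm ≤ (Q.support.erase 0).card := herase
  _ = (↑(Q.support.erase 0) : Set ℕ).ncard := (Set.ncard_coe_finset _).symm
  _ ≤ T.ncard := Set.ncard_le_ncard hsubT hTfin


/-- **Remark 3.2(a) (extension of Theorem 1.3(i)).**
Let `{a s (n s)}_{s=1}^k` be an `m`-cover of `ℤ`, `m₁,…,m_k ∈ ℤ`, and let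
`μ₁,…,μ_k` be positive rationals with `∑_{s∈I} μ_s ∈ ℤ` whenever
`∑_{s∈I} m_s/n_s ∈ ℤ`.  Then `{ ∑_{s∈I} μ_s : ∅ ≠ I, ∑_{s∈I} m_s/n_s ∈ ℤ }` has at
least `m` elements; in particular so does `{ |I| : ∅ ≠ I, ∑_{s∈I} m_s/n_s ∈ ℤ }`. -/
theorem stmt12 (mm : ℕ) (k : ℕ) (a : Fin k → ℤ) (n : Fin k → ℕ) (hn : ∀ s, 0 < n s)
    (hcover : ∀ x : ℤ,
      mm ≤ (Finset.univ.filter fun s : Fin k => (n s : ℤ) ∣ x - a s).card)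
    (m : Fin k → ℤ) (μ : Fin k → ℚ) (hμpos : ∀ s, 0 < μ s)
    (hμint : ∀ I : Finset (Fin k),
      (∃ z : ℤ, ∑ s ∈ I, (m s : ℚ) / (n s : ℚ) = z) → ∃ z : ℤ, ∑ s ∈ I, μ s = z) :
    mm ≤ {q : ℚ | ∃ I : Finset (Fin k), I.Nonempty ∧
        (∃ z : ℤ, ∑ s ∈ I, (m s : ℚ) / (n s : ℚ) = z) ∧ ∑ s ∈ I, μ s = q}.ncard ∧
    mm ≤ {c : ℕ | ∃ I : Finset (Fin k), I.Nonempty ∧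
        (∃ z : ℤ, ∑ s ∈ I, (m s : ℚ) / (n s : ℚ) = z) ∧ I.card = c}.ncard := by
  classical
  constructor
  · -- first conjunct
    set D : ℕ := ∏ s, (μ s).den with hDdef
    have hDpos : 0 < D := Finset.prod_pos fun s _ => (μ s).pos
    have hDQ : (D : ℚ) ≠ 0 := Nat.cast_ne_zero.mpr hDpos.ne'
    have hint : ∀ s, ∃ z : ℤ, (μ s) * D = (z : ℚ) := by
      intro s
      obtain ⟨t, hDt⟩ := Finset.dvd_prod_of_mem (fun s => (μ s).den) (Finset.mem_univ s)
      refine ⟨(μ s).num * t, ?_⟩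
      have hcast : (D : ℚ) = ((μ s).den : ℚ) * (t : ℚ) := by
        rw [hDdef]; exact_mod_cast congrArg (Nat.cast : ℕ → ℚ) hDt
      have hden : ((μ s).den : ℚ) ≠ 0 := Nat.cast_ne_zero.mpr (μ s).pos.ne'
      have hmd : μ s * ((μ s).den : ℚ) = ((μ s).num : ℚ) :=
        ((div_eq_iff hden).mp (Rat.num_div_den (μ s))).symm
      rw [hcast]
      push_cast
      calc μ s * (((μ s).den : ℚ) * (t : ℚ)) = μ s * ((μ s).den : ℚ) * t := by ring
      _ = ((μ s).num : ℚ) * t := by rw [hmd]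
    set p : Fin k → ℕ := fun s => (μ s * D).num.toNat with hpdef
    have hpμ : ∀ s, ((p s : ℕ) : ℚ) = μ s * D := by
      intro s
      obtain ⟨z, hz⟩ := hint s
      have hpos : (0 : ℚ) < μ s * D :=
        mul_pos (hμpos s) (by exact_mod_cast hDpos)
      have hznn : 0 ≤ z := by
        have : (0 : ℚ) < (z : ℚ) := hz ▸ hpos
        exact_mod_cast this.le
      show (((μ s * (D : ℚ)).num).toNat : ℚ) = μ s * D
      rw [hz, Rat.num_intCast]
      have : ((z.toNat : ℕ) : ℤ) = z := Int.toNat_of_nonneg hznn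
      exact_mod_cast this
    have hp : ∀ s, 0 < p s := by
      intro s
      have h := hpμ s
      have hpos : (0 : ℚ) < μ s * D := mul_pos (hμpos s) (by exact_mod_cast hDpos)
      rw [← h] at hpos
      exact_mod_cast hpos
    have hcore := aux_core mm k a n hn hcover m p hp
    have himg : {q : ℚ | ∃ I : Finset (Fin k), I.Nonempty ∧
        (∃ z : ℤ, ∑ s ∈ I, (m s : ℚ) / (n s : ℚ) = z) ∧ ∑ s ∈ I, μ s = q}
        = (fun e : ℕ => (e : ℚ) / D) '' {e : ℕ | ∃ I : Finset (Fin k), I.Nonempty ∧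
        (∃ z : ℤ, ∑ s ∈ I, (m s : ℚ) / (n s : ℚ) = z) ∧ ∑ s ∈ I, p s = e} := by
      have hsum : ∀ I : Finset (Fin k), ∑ s ∈ I, μ s = ((∑ s ∈ I, p s : ℕ) : ℚ) / D := by
        intro I
        push_cast
        rw [Finset.sum_div]
        apply Finset.sum_congr rfl
        intro s _
        rw [eq_div_iff hDQ, ← hpμ s]
      ext q
      constructor
      · rintro ⟨I, hIne, hcond, rfl⟩
        exact ⟨∑ s ∈ I, p s, ⟨I, hIne, hcond, rfl⟩, (hsum I).symm⟩
      · rintro ⟨e, ⟨I, hIne, hcond, rfl⟩, rfl⟩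
        exact ⟨I, hIne, hcond, hsum I⟩
    rw [himg, Set.ncard_image_of_injective _ ?_]
    · exact hcore
    · intro x y h
      simp only at h
      have h2 := congrArg (fun q : ℚ => q * D) h
      rw [div_mul_cancel₀ _ hDQ, div_mul_cancel₀ _ hDQ] at h2
      exact_mod_cast h2
  · -- second conjunct
    have hcore := aux_core mm k a n hn hcover m (fun _ => 1) (fun _ => one_pos)
    have heq : {e : ℕ | ∃ I : Finset (Fin k), I.Nonempty ∧
        (∃ z : ℤ, ∑ s ∈ I, (m s : ℚ) / (n s : ℚ) = z) ∧ ∑ _s ∈ I, 1 = e}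
        = {c : ℕ | ∃ I : Finset (Fin k), I.Nonempty ∧
        (∃ z : ℤ, ∑ s ∈ I, (m s : ℚ) / (n s : ℚ) = z) ∧ I.card = c} := by
      ext e
      constructor
      · rintro ⟨I, h1, h2, h3⟩
        exact ⟨I, h1, h2, by rw [Finset.card_eq_sum_ones]; exact h3⟩
      · rintro ⟨I, h1, h2, h3⟩
        exact ⟨I, h1, h2, by rw [← Finset.card_eq_sum_ones]; exact h3⟩
    rw [← heq]
    exact hcore
end

section
/- Let p be a prime and let c_1,...,c_k ∈ ℤ/pℤ. If Σ_{s∈I} c_s ≠ 0 for every nonempty subset I ⊆ {1,...,k}, then the set { Σ_{s∈I} c_s : I nonempty, I ⊆ {1,...,k} } has at least k elements. -/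
/-! If no nonempty subfamily of `c` sums to zero, then the `k` prefix sums `c₁ + ⋯ + c_j` are
pairwise distinct: two equal prefix sums would make the block `c_{i+1} + ⋯ + c_j` between them
a nonempty zero sum. The prefix sums are themselves nonempty subset sums. -/

open Finset

section PrefixSums

variable {ι G : Type*} [LinearOrder ι] [LocallyFiniteOrderBot ι] [AddCommGroup G]

theorem sum_Iic_ne_of_lt (c : ι → G) (hzero : ∀ I : Finset ι, I.Nonempty → ∑ s ∈ I, c s ≠ 0)
    {i j : ι} (hij : i < j) : ∑ s ∈ Iic i, c s ≠ ∑ s ∈ Iic j, c s := by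
  have hsub : Iic i ⊆ Iic j := Iic_subset_Iic.mpr hij.le
  have hblock : (Iic j \ Iic i).Nonempty := ⟨j, by simp [hij.not_ge]⟩
  intro heq
  apply hzero _ hblock
  rw [sum_sdiff_eq_sub hsub, heq, sub_self]

theorem injective_sum_Iic (c : ι → G) (hzero : ∀ I : Finset ι, I.Nonempty → ∑ s ∈ I, c s ≠ 0) :
    Function.Injective fun j => ∑ s ∈ Iic j, c s := by
  intro i j h
  by_contra hne
  rcases Ne.lt_or_gt hne with hlt | hlt
  · exact sum_Iic_ne_of_lt c hzero hlt h
  · exact sum_Iic_ne_of_lt c hzero hlt h.symm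

theorem card_le_ncard_nonempty_subset_sums [Finite ι] (c : ι → G)
    (hzero : ∀ I : Finset ι, I.Nonempty → ∑ s ∈ I, c s ≠ 0) :
    Nat.card ι ≤ {x : G | ∃ I : Finset ι, I.Nonempty ∧ ∑ s ∈ I, c s = x}.ncard := by
  have hprefix : Set.range (fun j => ∑ s ∈ Iic j, c s) ⊆
      {x : G | ∃ I : Finset ι, I.Nonempty ∧ ∑ s ∈ I, c s = x} := by
    rintro _ ⟨j, rfl⟩
    exact ⟨Iic j, nonempty_Iic, rfl⟩
  have hfinite : {x : G | ∃ I : Finset ι, I.Nonempty ∧ ∑ s ∈ I, c s = x}.Finite :=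
    (Set.finite_range fun I : Finset ι => ∑ s ∈ I, c s).subset fun _ ⟨I, _, hI⟩ => ⟨I, hI⟩
  calc Nat.card ι = (Set.range fun j => ∑ s ∈ Iic j, c s).ncard :=
        (Set.ncard_range_of_injective (injective_sum_Iic c hzero)).symm
    _ ≤ _ := Set.ncard_le_ncard hprefix hfinite

end PrefixSums

theorem stmt13_general (p : ℕ) (k : ℕ) (c : Fin k → ZMod p)
    (hzero : ∀ I : Finset (Fin k), I.Nonempty → (∑ s ∈ I, c s) ≠ 0) :
    k ≤ {x : ZMod p | ∃ I : Finset (Fin k), I.Nonempty ∧ (∑ s ∈ I, c s) = x}.ncard := by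
  simpa using card_le_ncard_nonempty_subset_sums c hzero

/-- **Remark 3.2(b).**
If `c₁,…,c_k ∈ ℤ/pℤ` with `p` a prime, and `∑_{s∈I} c_s = 0` for no nonempty
`I ⊆ {1,…,k}`, then `{ ∑_{s∈I} c_s : ∅ ≠ I ⊆ {1,…,k} }` has at least `k` elements. -/
theorem stmt13 (p : ℕ) (hp : p.Prime) (k : ℕ) (c : Fin k → ZMod p)
    (hzero : ∀ I : Finset (Fin k), I.Nonempty → (∑ s ∈ I, c s) ≠ 0) :
    k ≤ {x : ZMod p | ∃ I : Finset (Fin k), I.Nonempty ∧ (∑ s ∈ I, c s) = x}.ncard :=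
  stmt13_general p k c hzero
end

section
/- Let A = {a_s(n_s)}_{s=1}^k be a finite system of residue classes, let m_1,...,m_k ∈ ℤ with gcd(m_s, n_s) = 1 for each s, and let f(x_1,...,x_k) ∈ ℂ[x_1,...,x_k] have total degree at most m(A). For z ∈ ℤ put I_z = {1 ≤ s ≤ k : z ≡ a_s (mod n_s)}. If for every real θ with 0 ≤ θ < 1 one has ψ(θ) := Σ_{I ⊆ {1,...,k}, {Σ_{s∈I} m_s/n_s} = θ} (−1)^{|I|} f([1∈I],...,[k∈I]) e^{2πi Σ_{s∈I} a_s m_s/n_s} = 0, then for every z ∈ ℤ the coefficient of the monomial ∏_{s∈I_z} x_s in f is 0. -/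
open scoped Classical in
/-- **Lemma 4.1, converse direction.**
Let `A = {a s (n s)}_{s=1}^k`, let `m₁,…,m_k ∈ ℤ` with `gcd(m_s, n_s) = 1` for each `s`,
and let `f ∈ ℂ[x₁,…,x_k]` have total degree at most the covering multiplicity
`m(A) = min_x w_A(x)`.  If for every `θ ∈ [0,1)` we have
`ψ(θ) = ∑_{I, {∑_{s∈I} m_s/n_s} = θ} (−1)^{|I|} f([1∈I],…,[k∈I])
e^{2πi ∑_{s∈I} a_s m_s/n_s} = 0`, then for every `z ∈ ℤ` the coefficient of
`∏_{s∈I_z} x_s` in `f` vanishes, where `I_z = {s : z ≡ a_s (mod n_s)}`. -/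
theorem stmt15 (k : ℕ) (a : Fin k → ℤ) (n : Fin k → ℕ) (hn : ∀ s, 0 < n s)
    (m : Fin k → ℤ) (hcop : ∀ s, Int.gcd (m s) (n s) = 1)
    (f : MvPolynomial (Fin k) ℂ)
    (hdeg : f.totalDegree ≤
      sInf (Set.range fun x : ℤ =>
        (Finset.univ.filter fun s : Fin k => (n s : ℤ) ∣ x - a s).card))
    (hψ : ∀ θ : ℝ, 0 ≤ θ → θ < 1 →
      ∑ I ∈ Finset.univ.filter (fun I : Finset (Fin k) =>
          ((Int.fract (∑ s ∈ I, (m s : ℚ) / (n s : ℚ)) : ℚ) : ℝ) = θ),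
        (-1 : ℂ) ^ I.card *
          MvPolynomial.eval (fun s => if s ∈ I then (1 : ℂ) else 0) f *
          Complex.exp (2 * Real.pi * Complex.I *
            ((∑ s ∈ I, (a s * m s : ℚ) / (n s : ℚ) : ℚ) : ℂ)) = 0) :
    ∀ z : ℤ,
      MvPolynomial.coeff
        (∑ s ∈ Finset.univ.filter (fun s : Fin k => (n s : ℤ) ∣ z - a s),
          Finsupp.single s 1) f = 0 := by
  intro z
  classical
  set T : Finset (Fin k) := Finset.univ.filter (fun s : Fin k => (n s : ℤ) ∣ z - a s) with hT
  have hn0 : ∀ s, ((n s : ℚ)) ≠ 0 := fun s => Nat.cast_ne_zero.mpr (hn s).ne'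
  set q : Fin k → ℚ := fun s => ((a s - z) * m s : ℚ) / (n s : ℚ) with hq
  set E : Fin k → ℂ := fun s => Complex.exp (2 * Real.pi * Complex.I * ((q s : ℚ) : ℂ)) with hE
  set ψterm : Finset (Fin k) → ℂ := fun S =>
    (-1 : ℂ) ^ S.card *
      MvPolynomial.eval (fun s => if s ∈ S then (1 : ℂ) else 0) f *
      Complex.exp (2 * Real.pi * Complex.I *
        ((∑ s ∈ S, (a s * m s : ℚ) / (n s : ℚ) : ℚ) : ℂ)) with hψterm
  set g : Finset (Fin k) → ℝ :=
    fun S => ((Int.fract (∑ s ∈ S, (m s : ℚ) / (n s : ℚ)) : ℚ) : ℝ) with hg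
  -- Step 1a: the weighted full sum vanishes
  have hall : ∑ S : Finset (Fin k),
      ψterm S * Complex.exp (-(2 * Real.pi * Complex.I) * (z : ℂ) *
        ((Int.fract (∑ s ∈ S, (m s : ℚ) / (n s : ℚ)) : ℚ) : ℂ)) = 0 := by
    rw [← Finset.sum_fiberwise_of_maps_to
      (g := g) (t := Finset.univ.image g)
      (fun S _ => Finset.mem_image_of_mem g (Finset.mem_univ S))]
    apply Finset.sum_eq_zero
    intro θ hθ
    obtain ⟨S₀, -, hS₀⟩ := Finset.mem_image.mp hθ
    have hθ0 : 0 ≤ θ := by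
      rw [← hS₀]; simp only [hg]
      exact_mod_cast Int.fract_nonneg (∑ s ∈ S₀, (m s : ℚ) / (n s : ℚ))
    have hθ1 : θ < 1 := by
      rw [← hS₀]; simp only [hg]
      exact_mod_cast Int.fract_lt_one (∑ s ∈ S₀, (m s : ℚ) / (n s : ℚ))
    have hfix : ∀ S ∈ Finset.univ.filter (fun S => g S = θ),
        ((Int.fract (∑ s ∈ S, (m s : ℚ) / (n s : ℚ)) : ℚ) : ℂ) = ((θ : ℝ) : ℂ) := by
      intro S hS
      have h := (Finset.mem_filter.mp hS).2
      simp only [hg] at h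
      rw [← h]
      norm_cast
    have h0 := hψ θ hθ0 hθ1
    calc ∑ S ∈ Finset.univ.filter (fun S => g S = θ),
          ψterm S * Complex.exp (-(2 * Real.pi * Complex.I) * (z : ℂ) *
            ((Int.fract (∑ s ∈ S, (m s : ℚ) / (n s : ℚ)) : ℚ) : ℂ))
        = ∑ S ∈ Finset.univ.filter (fun S => g S = θ),
          ψterm S * Complex.exp (-(2 * Real.pi * Complex.I) * (z : ℂ) * ((θ : ℝ) : ℂ)) :=
          Finset.sum_congr rfl fun S hS => by rw [hfix S hS]
      _ = (∑ S ∈ Finset.univ.filter (fun S => g S = θ), ψterm S) *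
            Complex.exp (-(2 * Real.pi * Complex.I) * (z : ℂ) * ((θ : ℝ) : ℂ)) := by
          rw [Finset.sum_mul]
      _ = 0 := by
          have hfil : Finset.univ.filter (fun S => g S = θ)
              = Finset.univ.filter (fun I : Finset (Fin k) =>
                  ((Int.fract (∑ s ∈ I, (m s : ℚ) / (n s : ℚ)) : ℚ) : ℝ) = θ) := by
            apply Finset.filter_congr
            intro S _
            simp only [hg]
          rw [hfil, h0, zero_mul]
  -- Step 1b: the key identity
  have key : ∑ S : Finset (Fin k),
      (-1 : ℂ) ^ S.card *
        MvPolynomial.eval (fun s => if s ∈ S then (1 : ℂ) else 0) f *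
        ∏ s ∈ S, E s = 0 := by
    have keystep : ∀ S : Finset (Fin k),
        (-1 : ℂ) ^ S.card *
          MvPolynomial.eval (fun s => if s ∈ S then (1 : ℂ) else 0) f *
          ∏ s ∈ S, E s
        = ψterm S * Complex.exp (-(2 * Real.pi * Complex.I) * (z : ℂ) *
            ((Int.fract (∑ s ∈ S, (m s : ℚ) / (n s : ℚ)) : ℚ) : ℂ)) := by
      intro S
      have hrat : (∑ s ∈ S, (a s * m s : ℚ) / (n s : ℚ))
          - (z : ℚ) * Int.fract (∑ s ∈ S, (m s : ℚ) / (n s : ℚ))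
          = (∑ s ∈ S, q s) + (z : ℚ) * (⌊∑ s ∈ S, (m s : ℚ) / (n s : ℚ)⌋ : ℚ) := by
        rw [Int.fract]
        have h : (∑ s ∈ S, q s) = (∑ s ∈ S, (a s * m s : ℚ) / (n s : ℚ))
            - (z : ℚ) * (∑ s ∈ S, (m s : ℚ) / (n s : ℚ)) := by
          rw [Finset.mul_sum, ← Finset.sum_sub_distrib]
          refine Finset.sum_congr rfl fun s _ => ?_
          simp only [hq]
          push_cast
          ring
        rw [h]
        ring
      have hratC : ((∑ s ∈ S, (a s * m s : ℚ) / (n s : ℚ) : ℚ) : ℂ)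
          - (z : ℂ) * ((Int.fract (∑ s ∈ S, (m s : ℚ) / (n s : ℚ)) : ℚ) : ℂ)
          = ((∑ s ∈ S, q s : ℚ) : ℂ)
            + (z : ℂ) * ((⌊∑ s ∈ S, (m s : ℚ) / (n s : ℚ)⌋ : ℤ) : ℂ) := by
        exact_mod_cast congrArg (fun x : ℚ => (x : ℂ)) hrat
      have hprod : ∏ s ∈ S, E s
          = Complex.exp (2 * Real.pi * Complex.I * ((∑ s ∈ S, q s : ℚ) : ℂ)) := by
        simp only [hE]
        rw [← Complex.exp_sum]
        congr 1
        rw [← Finset.mul_sum]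
        congr 1
        push_cast
        ring
      have hexp : Complex.exp (2 * Real.pi * Complex.I * ((∑ s ∈ S, q s : ℚ) : ℂ))
          = Complex.exp (2 * Real.pi * Complex.I *
              ((∑ s ∈ S, (a s * m s : ℚ) / (n s : ℚ) : ℚ) : ℂ)) *
            Complex.exp (-(2 * Real.pi * Complex.I) * (z : ℂ) *
              ((Int.fract (∑ s ∈ S, (m s : ℚ) / (n s : ℚ)) : ℚ) : ℂ)) := by
        have h2 := Complex.exp_int_mul_two_pi_mul_I (z * ⌊∑ s ∈ S, (m s : ℚ) / (n s : ℚ)⌋)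
        rw [← Complex.exp_add]
        calc Complex.exp (2 * Real.pi * Complex.I * ((∑ s ∈ S, q s : ℚ) : ℂ))
            = Complex.exp (2 * Real.pi * Complex.I * ((∑ s ∈ S, q s : ℚ) : ℂ)) *
                Complex.exp (((z * ⌊∑ s ∈ S, (m s : ℚ) / (n s : ℚ)⌋ : ℤ) : ℂ) *
                  (2 * Real.pi * Complex.I)) := by rw [h2, mul_one]
          _ = Complex.exp (2 * Real.pi * Complex.I * ((∑ s ∈ S, q s : ℚ) : ℂ)
                + ((z * ⌊∑ s ∈ S, (m s : ℚ) / (n s : ℚ)⌋ : ℤ) : ℂ) *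
                  (2 * Real.pi * Complex.I)) := (Complex.exp_add _ _).symm
          _ = _ := by
              congr 1
              push_cast at hratC ⊢
              linear_combination (-(2 * (Real.pi : ℂ) * Complex.I)) * hratC
      simp only [hψterm]
      rw [hprod, hexp]
      ring
    calc ∑ S : Finset (Fin k),
        (-1 : ℂ) ^ S.card *
          MvPolynomial.eval (fun s => if s ∈ S then (1 : ℂ) else 0) f *
          ∏ s ∈ S, E s
        = ∑ S : Finset (Fin k),
          ψterm S * Complex.exp (-(2 * Real.pi * Complex.I) * (z : ℂ) *
            ((Int.fract (∑ s ∈ S, (m s : ℚ) / (n s : ℚ)) : ℚ) : ℂ)) :=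
        Finset.sum_congr rfl fun S _ => keystep S
      _ = 0 := hall
  -- Step 2: expand eval and swap
  have expand : ∀ S : Finset (Fin k),
      MvPolynomial.eval (fun s => if s ∈ S then (1 : ℂ) else 0) f
        = ∑ α ∈ f.support, f.coeff α * (if α.support ⊆ S then (1 : ℂ) else 0) := by
    intro S
    rw [MvPolynomial.eval_eq]
    refine Finset.sum_congr rfl fun α hα => ?_
    congr 1
    by_cases h : α.support ⊆ S
    · rw [if_pos h]
      apply Finset.prod_eq_one
      intro i hi
      rw [if_pos (h hi), one_pow]
    · rw [if_neg h]
      obtain ⟨i, hi, hiS⟩ := Finset.not_subset.mp h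
      refine Finset.prod_eq_zero hi ?_
      rw [if_neg hiS]
      exact zero_pow (Finsupp.mem_support_iff.mp hi)
  have key2 : ∑ α ∈ f.support, f.coeff α *
      ∏ s : Fin k, (-(E s) + (if s ∈ α.support then (0 : ℂ) else 1)) = 0 := by
    calc ∑ α ∈ f.support, f.coeff α *
          ∏ s : Fin k, (-(E s) + (if s ∈ α.support then (0 : ℂ) else 1))
        = ∑ α ∈ f.support, ∑ S : Finset (Fin k), f.coeff α *
            ((∏ s ∈ S, -(E s)) *
              ∏ s ∈ Finset.univ \ S, (if s ∈ α.support then (0 : ℂ) else 1)) := by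
          refine Finset.sum_congr rfl fun α hα => ?_
          rw [Finset.prod_add, ← Finset.powerset_univ, Finset.mul_sum]
      _ = ∑ S : Finset (Fin k), ∑ α ∈ f.support, f.coeff α *
            ((∏ s ∈ S, -(E s)) *
              ∏ s ∈ Finset.univ \ S, (if s ∈ α.support then (0 : ℂ) else 1)) :=
          Finset.sum_comm
      _ = ∑ S : Finset (Fin k),
          (-1 : ℂ) ^ S.card *
            MvPolynomial.eval (fun s => if s ∈ S then (1 : ℂ) else 0) f *
            ∏ s ∈ S, E s := by
          refine Finset.sum_congr rfl fun S _ => ?_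
          have hneg : (∏ s ∈ S, -(E s)) = (-1 : ℂ) ^ S.card * ∏ s ∈ S, E s := by
            rw [← Finset.prod_const, ← Finset.prod_mul_distrib]
            exact Finset.prod_congr rfl fun s _ => by ring
          have hind : ∀ α : Fin k →₀ ℕ,
              (∏ s ∈ Finset.univ \ S, (if s ∈ α.support then (0 : ℂ) else 1))
                = (if α.support ⊆ S then (1 : ℂ) else 0) := by
            intro α
            by_cases h : α.support ⊆ S
            · rw [if_pos h]
              apply Finset.prod_eq_one
              intro i hi
              rw [if_neg (fun hc => (Finset.mem_sdiff.mp hi).2 (h hc))]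
            · rw [if_neg h]
              obtain ⟨i, hi, hiS⟩ := Finset.not_subset.mp h
              refine Finset.prod_eq_zero (Finset.mem_sdiff.mpr ⟨Finset.mem_univ i, hiS⟩) ?_
              rw [if_pos hi]
          rw [expand S, Finset.mul_sum, Finset.sum_mul]
          refine Finset.sum_congr rfl fun α hα => ?_
          rw [hneg, hind α]
          ring
      _ = 0 := key
  -- Step 3: facts about T and E
  have hET : ∀ s ∈ T, E s = 1 := by
    intro s hs
    have hdvd : (n s : ℤ) ∣ z - a s := (Finset.mem_filter.mp hs).2
    obtain ⟨d, hd⟩ := hdvd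
    have hqs : q s = ((-(d * m s) : ℤ) : ℚ) := by
      simp only [hq]
      have hz : (a s : ℚ) - (z : ℚ) = -((n s : ℚ) * d) := by
        have h' : (a s - z : ℤ) = -(n s * d) := by omega
        exact_mod_cast congrArg (fun t : ℤ => (t : ℚ)) h'
      rw [hz]
      push_cast
      field_simp [hn0 s]
    simp only [hE]
    rw [hqs]
    have h1 := Complex.exp_int_mul_two_pi_mul_I (-(d * m s))
    rw [← h1]
    congr 1
    push_cast
    ring
  have hETc : ∀ s ∉ T, E s ≠ 1 := by
    intro s hs hcon
    simp only [hE] at hcon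
    rw [Complex.exp_eq_one_iff] at hcon
    obtain ⟨j, hj⟩ := hcon
    have hqj : ((q s : ℚ) : ℂ) = (j : ℂ) := by
      have h2 : (2 * (Real.pi : ℂ) * Complex.I) ≠ 0 :=
        mul_ne_zero (mul_ne_zero two_ne_zero
          (Complex.ofReal_ne_zero.mpr Real.pi_ne_zero)) Complex.I_ne_zero
      apply mul_left_cancel₀ h2
      rw [hj]; ring
    have hq2 : q s = (j : ℚ) := by exact_mod_cast hqj
    have hmul : ((a s - z) * m s : ℤ) = j * (n s : ℤ) := by
      have h' : ((a s : ℚ) - z) * (m s : ℚ) = (j : ℚ) * (n s : ℚ) := by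
        have h3 := hq2
        simp only [hq] at h3
        field_simp [hn0 s] at h3
        linarith [h3]
      exact_mod_cast h'
    have hdvd : (n s : ℤ) ∣ (a s - z) * m s := ⟨j, by linarith [hmul]⟩
    have hcop' : Int.gcd (n s : ℤ) (m s) = 1 := by rw [Int.gcd_comm]; exact hcop s
    have hdvd2 : (n s : ℤ) ∣ a s - z := Int.dvd_of_dvd_mul_left_of_gcd_one hdvd hcop'
    have hdvd3 : (n s : ℤ) ∣ z - a s := by simpa using (dvd_neg.mpr hdvd2)
    exact hs (Finset.mem_filter.mpr ⟨Finset.mem_univ s, hdvd3⟩)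
  -- Step 4: the target monomial
  set αz : Fin k →₀ ℕ := ∑ s ∈ T, Finsupp.single s 1 with hαz
  have hαz_apply : ∀ t, αz t = if t ∈ T then 1 else 0 := by
    intro t
    rw [hαz, Finsupp.finset_sum_apply]
    simp [Finsupp.single_apply]
  have hαz_supp : αz.support = T := by
    ext t
    rw [Finsupp.mem_support_iff, hαz_apply]
    by_cases h : t ∈ T <;> simp [h]
  have hsInf : sInf (Set.range fun x : ℤ =>
      (Finset.univ.filter fun s : Fin k => (n s : ℤ) ∣ x - a s).card) ≤ T.card :=
    Nat.sInf_le ⟨z, rfl⟩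
  have hforce : ∀ α ∈ f.support, T ⊆ α.support → α = αz := by
    intro α hα hsub
    have h1 : α.support.card ≤ α.sum fun _ e => e := by
      rw [Finsupp.sum]
      calc α.support.card = ∑ s ∈ α.support, 1 := by rw [Finset.card_eq_sum_ones]
        _ ≤ ∑ s ∈ α.support, α s :=
          Finset.sum_le_sum fun s hs =>
            Nat.one_le_iff_ne_zero.mpr (Finsupp.mem_support_iff.mp hs)
    have h2 : (α.sum fun _ e => e) ≤ f.totalDegree := MvPolynomial.le_totalDegree hα
    have hcard : T.card ≤ α.support.card := Finset.card_le_card hsub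
    have hsuppeq : α.support = T := by
      refine (Finset.eq_of_subset_of_card_le hsub ?_).symm
      omega
    have hsum1 : (α.sum fun _ e => e) = α.support.card := by omega
    have hone : ∀ s ∈ α.support, α s = 1 := by
      by_contra hc
      push_neg at hc
      obtain ⟨s, hs, hne⟩ := hc
      have h1lt : 1 < α s :=
        lt_of_le_of_ne (Nat.one_le_iff_ne_zero.mpr (Finsupp.mem_support_iff.mp hs))
          (Ne.symm hne)
      have hlt : ∑ t ∈ α.support, 1 < ∑ t ∈ α.support, α t :=
        Finset.sum_lt_sum
          (fun t ht => Nat.one_le_iff_ne_zero.mpr (Finsupp.mem_support_iff.mp ht))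
          ⟨s, hs, h1lt⟩
      rw [Finset.sum_const, smul_eq_mul, mul_one] at hlt
      have hs1 := hsum1
      rw [Finsupp.sum] at hs1
      omega
    ext t
    rw [hαz_apply]
    by_cases h : t ∈ T
    · rw [if_pos h]
      exact hone t (hsuppeq ▸ h)
    · rw [if_neg h]
      by_contra hc
      exact h (hsuppeq ▸ Finsupp.mem_support_iff.mpr hc)
  -- collapse key2 to a single term
  have hcollapse : ∑ α ∈ f.support, f.coeff α *
      ∏ s : Fin k, (-(E s) + (if s ∈ α.support then (0 : ℂ) else 1))
      = f.coeff αz * ∏ s : Fin k, (-(E s) + (if s ∈ αz.support then (0 : ℂ) else 1)) := by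
    apply Finset.sum_eq_single αz
    · intro α hα hne
      by_cases hsub : T ⊆ α.support
      · exact absurd (hforce α hα hsub) hne
      · obtain ⟨s, hs, hsn⟩ := Finset.not_subset.mp hsub
        apply mul_eq_zero_of_right
        refine Finset.prod_eq_zero (Finset.mem_univ s) ?_
        rw [if_neg hsn, hET s hs]
        ring
    · intro h
      rw [MvPolynomial.notMem_support_iff.mp h, zero_mul]
  have hsingle : f.coeff αz *
      ∏ s : Fin k, (-(E s) + (if s ∈ αz.support then (0 : ℂ) else 1)) = 0 :=
    hcollapse.symm.trans key2
  have hPne : (∏ s : Fin k, (-(E s) + (if s ∈ αz.support then (0 : ℂ) else 1))) ≠ 0 := by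
    rw [Finset.prod_ne_zero_iff]
    intro s _
    rw [hαz_supp]
    by_cases h : s ∈ T
    · rw [if_pos h, hET s h]
      norm_num
    · rw [if_neg h]
      intro hc
      exact hETc s h (by linear_combination -hc)
  exact (mul_eq_zero.mp hsingle).resolve_right hPne
end
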